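/- arXiv:2312.15886 — 6 statements merged into one kernel-verified Lean document; each statement's English description precedes it below -/
import Mathlib

section
/- The pmf f_k(n) = P(N_k = n) of the geometric distribution of order k satisfies the recurrence f_k(n) = q f_k(n-1) + p q f_k(n-2) + p^2 q f_k(n-3) + ... + p^{k-1} q f_k(n-k) for n > k, with initial conditions f_k(n) = 0 for 1 ≤ n ≤ k-1 and f_k(k) = p^k. -/
open Finset

attribute [local instance] Classical.propDecidable

/-- `hasRunEnd k n ω m` : in the outcome string `ω` of `n` Bernoulli trials, a run of
`k` consecutive successes ends at trial `m` (trials `m-k+1, ..., m` are successes). -/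
def hasRunEnd (k n : ℕ) (ω : Fin n → Bool) (m : ℕ) : Prop :=
  k ≤ m ∧ m ≤ n ∧ ∀ j : Fin n, m - k ≤ (j : ℕ) → (j : ℕ) < m → ω j = true

/-- The first run of `k` consecutive successes is completed exactly at trial `n`. -/
def firstRun (k n : ℕ) (ω : Fin n → Bool) : Prop :=
  hasRunEnd k n ω n ∧ ∀ m < n, ¬ hasRunEnd k n ω m

/-- The pmf of the geometric distribution of order `k`:
`fk k p n = P(N_k = n)` where `N_k` is the waiting time for the first run of `k`
consecutive successes in i.i.d. Bernoulli(`p`) trials; each outcome string contributes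
`p^{#successes} (1-p)^{#failures}`. -/
noncomputable def fk (k : ℕ) (p : ℝ) (n : ℕ) : ℝ :=
  ∑ ω ∈ Finset.univ.filter (fun ω : Fin n → Bool => firstRun k n ω),
    p ^ (Finset.univ.filter (fun i => ω i = true)).card *
      (1 - p) ^ (Finset.univ.filter (fun i => ω i = false)).card

def pre (n i : ℕ) (ω : Fin n → Bool) : Prop :=
  (∀ j : Fin n, (j:ℕ) < i-1 → ω j = true) ∧ ∀ j : Fin n, (j:ℕ) = i-1 → ω j = false

lemma fk_eq (k : ℕ) (p : ℝ) (n : ℕ) :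
    fk k p n = ∑ ω ∈ univ.filter (fun ω : Fin n → Bool => firstRun k n ω),
      ∏ j : Fin n, (if ω j = true then p else 1-p) := by
  unfold fk
  refine Finset.sum_congr rfl fun ω _ => ?_
  rw [Finset.prod_ite, Finset.prod_const, Finset.prod_const]
  congr 2
  exact congrArg Finset.card (Finset.filter_congr fun j _ => by simp [Bool.not_eq_true])

lemma prod_split (i n : ℕ) (h : i ≤ n) (f : ℕ → ℝ) :
    ∏ j : Fin n, f j = (∏ j : Fin i, f j) * ∏ j : Fin (n-i), f (i + j) := by
  rcases Nat.exists_eq_add_of_le h with ⟨m, rfl⟩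
  rw [show i + m - i = m from by omega, Fin.prod_univ_add]
  simp

lemma run_shift (k n i : ℕ) (hi1 : 1 ≤ i) (hik : i ≤ k) (hin : k + i ≤ n)
    (ω : Fin n → Bool) (hpre : pre n i ω)
    (ω' : Fin (n-i) → Bool) (hω' : ∀ j : Fin (n-i), ω' j = ω ⟨i + j, by omega⟩) (m : ℕ) :
    hasRunEnd k n ω m ↔ (k + i ≤ m ∧ m ≤ n ∧ hasRunEnd k (n-i) ω' (m - i)) := by
  constructor
  · rintro ⟨h1, h2, h3⟩
    have hm : k + i ≤ m := by
      by_contra hcon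
      push_neg at hcon
      have hlt : i - 1 < n := by omega
      have := h3 ⟨i-1, hlt⟩ (by simp; omega) (by simp; omega)
      rw [hpre.2 ⟨i-1, hlt⟩ (by simp)] at this
      simp at this
    refine ⟨hm, h2, by omega, by omega, ?_⟩
    intro j hj1 hj2
    rw [hω' j]
    apply h3
    · simp; omega
    · simp; omega
  · rintro ⟨hm, hmn, h1, h2, h3⟩
    refine ⟨by omega, hmn, ?_⟩
    intro j hj1 hj2
    have hji : i ≤ (j:ℕ) := by omega
    have hlt : (j:ℕ) - i < n - i := by omega
    have hval := h3 ⟨(j:ℕ) - i, hlt⟩ (by simp; omega) (by simp; omega)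
    rw [hω'] at hval
    have hje : (⟨i + ((j:ℕ) - i), by omega⟩ : Fin n) = j := by
      apply Fin.ext; simp; omega
    rwa [hje] at hval

lemma firstRun_shift (k n i : ℕ) (hi1 : 1 ≤ i) (hik : i ≤ k) (hin : k + i ≤ n)
    (ω : Fin n → Bool) (hpre : pre n i ω)
    (ω' : Fin (n-i) → Bool) (hω' : ∀ j : Fin (n-i), ω' j = ω ⟨i + j, by omega⟩) :
    firstRun k n ω ↔ firstRun k (n-i) ω' := by
  have key := run_shift k n i hi1 hik hin ω hpre ω' hω'
  constructor
  · rintro ⟨h1, h2⟩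
    refine ⟨((key n).mp h1).2.2, ?_⟩
    intro m' hm' hR
    have hk' : k ≤ m' := hR.1
    have : hasRunEnd k n ω (m' + i) := by
      refine (key (m'+i)).mpr ⟨by omega, by omega, ?_⟩
      rwa [show m' + i - i = m' from by omega]
    exact h2 (m'+i) (by omega) this
  · rintro ⟨h1, h2⟩
    constructor
    · exact (key n).mpr ⟨by omega, le_rfl, h1⟩
    · intro m hm hR
      have h' := (key m).mp hR
      exact h2 (m - i) (by omega) h'.2.2

lemma wt_shift (p : ℝ) (k n i : ℕ) (hi1 : 1 ≤ i) (hik : i ≤ k) (hin : k + i ≤ n)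
    (ω : Fin n → Bool) (hpre : pre n i ω)
    (ω' : Fin (n-i) → Bool) (hω' : ∀ j : Fin (n-i), ω' j = ω ⟨i + j, by omega⟩) :
    ∏ j : Fin n, (if ω j = true then p else 1-p)
      = (1-p) * p^(i-1) * ∏ j : Fin (n-i), (if ω' j = true then p else 1-p) := by
  set f : ℕ → ℝ := fun j => if h : j < n then (if ω ⟨j, h⟩ = true then p else 1-p) else 1 with hf
  have h1 : ∏ j : Fin n, (if ω j = true then p else 1-p) = ∏ j : Fin n, f j := by
    refine Finset.prod_congr rfl fun j _ => ?_
    rw [hf]; simp only [dif_pos j.isLt, Fin.eta]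
  rw [h1, prod_split i n (by omega) f]
  have h2 : ∏ j : Fin i, f j = p^(i-1) * (1-p) := by
    rw [prod_split (i-1) i (by omega) f]
    have ha : ∏ j : Fin (i-1), f j = p^(i-1) := by
      have : ∀ j : Fin (i-1), f j = p := by
        intro j
        have hjn : (j:ℕ) < n := by omega
        rw [hf]; simp only [dif_pos hjn]
        rw [hpre.1 ⟨j, hjn⟩ j.isLt]
        simp
      rw [Finset.prod_congr rfl (fun j _ => this j), Finset.prod_const]
      simp
    have hb : ∏ j : Fin (i - (i-1)), f ((i-1) + j) = 1 - p := by
      rw [show i - (i-1) = 1 from by omega, Fin.prod_univ_one, hf]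
      simp only [Fin.val_zero, add_zero]
      have hjn : i - 1 < n := by omega
      rw [dif_pos hjn, hpre.2 ⟨i-1, hjn⟩ rfl]
      simp
    rw [ha, hb]
  have h3 : ∏ j : Fin (n-i), f (i + j) = ∏ j : Fin (n-i), (if ω' j = true then p else 1-p) := by
    refine Finset.prod_congr rfl fun j _ => ?_
    have hjn : i + (j:ℕ) < n := by omega
    rw [hf]; simp only [dif_pos hjn]
    rw [hω' j]
  rw [h2, h3]; ring

lemma fk_zero (k : ℕ) (p : ℝ) (n : ℕ) (h1 : 1 ≤ n) (h2 : n < k) : fk k p n = 0 := by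
  unfold fk
  refine Finset.sum_eq_zero fun ω hω => ?_
  rw [Finset.mem_filter] at hω
  exact absurd hω.2.1.1 (by omega)

lemma sum_fiber (p : ℝ) (k n i : ℕ) (hk : 1 ≤ k) (hn : k < n) (hi1 : 1 ≤ i) (hik : i ≤ k) :
    ∑ ω ∈ univ.filter (fun ω : Fin n → Bool => firstRun k n ω ∧ pre n i ω),
      ∏ j : Fin n, (if ω j = true then p else 1-p)
      = (1-p) * p^(i-1) * fk k p (n-i) := by
  by_cases hc : k + i ≤ n
  · rw [fk_eq, Finset.mul_sum]
    refine Finset.sum_nbij'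
      (fun ω => fun j : Fin (n-i) => ω ⟨i + j, by omega⟩)
      (fun ω' => fun j : Fin n =>
        if (j:ℕ) < i - 1 then true else if (j:ℕ) < i then false
        else ω' ⟨(j:ℕ) - i, by omega⟩) ?_ ?_ ?_ ?_ ?_
    · intro ω hω
      rw [mem_filter] at hω ⊢
      refine ⟨mem_univ _, ?_⟩
      exact (firstRun_shift k n i hi1 hik hc ω hω.2.2 _ (fun j => rfl)).mp hω.2.1
    · intro ω' hω'
      rw [mem_filter] at hω' ⊢
      set G := fun j : Fin n =>
        if (j:ℕ) < i - 1 then true else if (j:ℕ) < i then false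
        else ω' ⟨(j:ℕ) - i, by omega⟩ with hG
      have hpre : pre n i G := by
        constructor
        · intro j hj; simp only [hG]; rw [if_pos hj]
        · intro j hj; simp only [hG]; rw [if_neg (by omega), if_pos (by omega)]
      have hshift : ∀ j : Fin (n-i), ω' j = G ⟨i + j, by omega⟩ := by
        intro j
        simp only [hG]
        rw [if_neg (by omega), if_neg (by omega)]
        congr 1
        exact Fin.ext (by simp)
      refine ⟨mem_univ _, ?_, hpre⟩
      exact (firstRun_shift k n i hi1 hik hc G hpre ω' hshift).mpr hω'.2
    · intro ω hω
      rw [mem_filter] at hω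
      funext j
      by_cases h1 : (j:ℕ) < i - 1
      · simp only
        rw [if_pos h1, (hω.2.2.1 j h1)]
      · by_cases h2 : (j:ℕ) < i
        · simp only
          rw [if_neg h1, if_pos h2, (hω.2.2.2 j (by omega))]
        · simp only
          rw [if_neg h1, if_neg h2]
          congr 1
          exact Fin.ext (by simp; omega)
    · intro ω' hω'
      funext j
      simp only
      rw [if_neg (by omega), if_neg (by omega)]
      congr 1
      exact Fin.ext (by simp)
    · intro ω hω
      rw [mem_filter] at hω
      exact wt_shift p k n i hi1 hik hc ω hω.2.2 _ (fun j => rfl)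
  · have hA : univ.filter (fun ω : Fin n → Bool => firstRun k n ω ∧ pre n i ω) = ∅ := by
      rw [Finset.filter_eq_empty_iff]
      rintro ω - ⟨hfr, hpre⟩
      have h1 := hfr.1.2.2 ⟨i-1, by omega⟩ (by simp; omega) (by simp; omega)
      rw [hpre.2 ⟨i-1, by omega⟩ (by simp)] at h1
      simp at h1
    rw [hA, Finset.sum_empty, fk_zero k p (n-i) (by omega) (by omega)]
    ring

lemma fk_at_k (k : ℕ) (hk : 1 ≤ k) (p : ℝ) : fk k p k = p ^ k := by
  unfold fk
  have hset : univ.filter (fun ω : Fin k → Bool => firstRun k k ω)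
      = {fun _ => true} := by
    ext ω
    simp only [mem_filter, mem_univ, true_and, mem_singleton]
    constructor
    · intro h
      funext j
      exact h.1.2.2 j (by omega) j.isLt
    · rintro rfl
      exact ⟨⟨le_rfl, le_rfl, fun j _ _ => rfl⟩, fun m hm h => absurd h.1 (by omega)⟩
  rw [hset, Finset.sum_singleton]
  simp

/-- The pmf satisfies the recurrence
`f_k(n) = Σ_{i=1}^k q p^{i-1} f_k(n-i)` for `n > k`, with initial conditions
`f_k(n) = 0` for `1 ≤ n ≤ k-1` and `f_k(k) = p^k`. -/
theorem pmf_recurrence (k : ℕ) (hk : 1 ≤ k) (p q : ℝ) (hp0 : 0 < p) (hp1 : p < 1)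
    (hq : q = 1 - p) :
    (∀ n, 1 ≤ n → n < k → fk k p n = 0) ∧ fk k p k = p ^ k ∧
      ∀ n, k < n → fk k p n = ∑ i ∈ Finset.Icc 1 k, q * p ^ (i - 1) * fk k p (n - i) := by
  subst hq
  refine ⟨fun n h1 h2 => fk_zero k p n h1 h2, fk_at_k k hk p, ?_⟩
  intro n hn
  rw [fk_eq]
  set ι : (Fin n → Bool) → ℕ := fun ω =>
    if h : (univ.filter (fun j : Fin n => ω j = false)).Nonempty
    then ((univ.filter (fun j : Fin n => ω j = false)).min' h : Fin n).val + 1 else 0 with hι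
  have hmaps : ∀ ω ∈ univ.filter (fun ω : Fin n → Bool => firstRun k n ω),
      ι ω ∈ Icc 1 k := by
    intro ω hω
    rw [mem_filter] at hω
    have hω := hω.2
    have hne : (univ.filter (fun j : Fin n => ω j = false)).Nonempty := by
      by_contra h
      rw [Finset.not_nonempty_iff_eq_empty, Finset.filter_eq_empty_iff] at h
      have hall : ∀ j : Fin n, ω j = true := by
        intro j; have := h (mem_univ j); simpa using this
      exact hω.2 k hn ⟨le_rfl, by omega, fun j _ _ => hall j⟩
    have hj0mem := Finset.min'_mem _ hne
    rw [mem_filter] at hj0mem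
    have hj0k : (((univ.filter (fun j : Fin n => ω j = false)).min' hne : Fin n) : ℕ) < k := by
      by_contra h
      push_neg at h
      apply hω.2 k hn
      refine ⟨le_rfl, by omega, fun j _ hjk => ?_⟩
      by_contra ht
      have hjf : ω j = false := by simpa using ht
      have hle : ((univ.filter (fun j : Fin n => ω j = false)).min' hne : Fin n) ≤ j :=
        Finset.min'_le _ j (mem_filter.mpr ⟨mem_univ _, hjf⟩)
      rw [Fin.le_def] at hle
      omega
    rw [hι]
    simp only
    rw [dif_pos hne, mem_Icc]
    omega
  rw [← Finset.sum_fiberwise_of_maps_to hmaps]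
  refine Finset.sum_congr rfl fun i hi => ?_
  rw [mem_Icc] at hi
  have hfiber : (univ.filter (fun ω : Fin n → Bool => firstRun k n ω)).filter
      (fun ω => ι ω = i)
      = univ.filter (fun ω : Fin n → Bool => firstRun k n ω ∧ pre n i ω) := by
    ext ω
    simp only [mem_filter, mem_univ, true_and]
    constructor
    · rintro ⟨hfr, hιω⟩
      refine ⟨hfr, ?_, ?_⟩
      · intro j hj
        by_contra ht
        have hjf : ω j = false := by simpa using ht
        have hne : (univ.filter (fun j : Fin n => ω j = false)).Nonempty :=
          ⟨j, by simp [hjf]⟩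
        rw [hι] at hιω
        simp only at hιω
        rw [dif_pos hne] at hιω
        have hle := Finset.min'_le (univ.filter (fun j : Fin n => ω j = false)) j
          (by simp [hjf])
        rw [Fin.le_def] at hle
        omega
      · intro j hj
        have hne : (univ.filter (fun j : Fin n => ω j = false)).Nonempty := by
          by_contra h
          rw [hι] at hιω
          simp only at hιω
          rw [dif_neg h] at hιω
          omega
        rw [hι] at hιω
        simp only at hιω
        rw [dif_pos hne] at hιω
        have hj0mem := Finset.min'_mem _ hne
        rw [mem_filter] at hj0mem
        have : j = (univ.filter (fun j : Fin n => ω j = false)).min' hne :=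
          Fin.ext (by omega)
        rw [this]
        exact hj0mem.2
    · rintro ⟨hfr, hpre⟩
      refine ⟨hfr, ?_⟩
      have hi1n : i - 1 < n := by omega
      have hmem : (⟨i-1, hi1n⟩ : Fin n) ∈ univ.filter (fun j : Fin n => ω j = false) :=
        mem_filter.mpr ⟨mem_univ _, hpre.2 _ rfl⟩
      have hne : (univ.filter (fun j : Fin n => ω j = false)).Nonempty := ⟨_, hmem⟩
      have hmin : (univ.filter (fun j : Fin n => ω j = false)).min' hne
          = (⟨i-1, hi1n⟩ : Fin n) := by
        refine le_antisymm (Finset.min'_le _ _ hmem) (Finset.le_min' _ _ _ fun y hy => ?_)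
        rw [mem_filter] at hy
        rw [Fin.le_def]
        simp only
        by_contra hlt
        push_neg at hlt
        have := hpre.1 y (by omega)
        rw [hy.2] at this
        simp at this
      rw [hι]
      simp only
      rw [dif_pos hne, hmin]
      simp
      omega
  rw [hfiber, sum_fiber p k n i hk hn hi.1 hi.2]
end

section
/- Every (complex) root of the auxiliary polynomial A(z) = z^k - q z^{k-1} - q p z^{k-2} - ... - q p^{k-1} has absolute value strictly less than 1. -/
open Finset

/-! If `‖x‖ ≥ 1`, the triangle inequality applied to `x ^ k = ∑ aᵢ x ^ (k - i)` gives
`‖x‖ ^ k ≤ (∑ ‖aᵢ‖) ‖x‖ ^ (k - 1) < ‖x‖ ^ (k - 1)`, which is impossible. For the auxiliary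
polynomial the coefficients are positive and sum to `1 - p ^ k < 1`. -/

theorem norm_lt_one_of_pow_eq_sum {𝕜 : Type*} [NormedDivisionRing 𝕜] {k : ℕ} {a : ℕ → 𝕜}
    {x : 𝕜} (ha : ∑ i ∈ Icc 1 k, ‖a i‖ < 1)
    (hx : x ^ k = ∑ i ∈ Icc 1 k, a i * x ^ (k - i)) : ‖x‖ < 1 := by
  by_contra! hx1
  have hpred : ‖x‖ ^ (k - 1) ≤ ‖x‖ ^ k := pow_le_pow_right₀ hx1 (Nat.sub_le k 1)
  have hpos : 0 < ‖x‖ ^ (k - 1) := pow_pos (zero_lt_one.trans_le hx1) _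
  have := calc ‖x‖ ^ k = ‖∑ i ∈ Icc 1 k, a i * x ^ (k - i)‖ := by rw [← norm_pow, hx]
    _ ≤ ∑ i ∈ Icc 1 k, ‖a i‖ * ‖x‖ ^ (k - i) := by
      simpa only [norm_mul, norm_pow] using norm_sum_le (Icc 1 k) fun i => a i * x ^ (k - i)
    _ ≤ ∑ i ∈ Icc 1 k, ‖a i‖ * ‖x‖ ^ (k - 1) := by
      gcongr with i hi
      exact (mem_Icc.mp hi).1
    _ = (∑ i ∈ Icc 1 k, ‖a i‖) * ‖x‖ ^ (k - 1) := (sum_mul ..).symm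
    _ < ‖x‖ ^ (k - 1) := mul_lt_of_lt_one_left hpos ha
  linarith

theorem sum_Icc_one_sub_mul_pow_pred {R : Type*} [CommRing R] (p : R) (k : ℕ) :
    ∑ i ∈ Icc 1 k, (1 - p) * p ^ (i - 1) = 1 - p ^ k := by
  induction k with
  | zero => simp
  | succ k ih => rw [sum_Icc_succ_top (Nat.le_add_left 1 k), ih, Nat.add_sub_cancel]; ring

theorem root_abs_lt_one_general (k : ℕ) (p q : ℝ) (hp0 : 0 < p) (hp1 : p < 1)
    (hq : q = 1 - p) (lam : ℂ)
    (hroot : lam ^ k - ∑ i ∈ Finset.Icc 1 k, (q : ℂ) * (p : ℂ) ^ (i - 1) * lam ^ (k - i) = 0) :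
    ‖lam‖ < 1 := by
  subst hq
  refine norm_lt_one_of_pow_eq_sum ?_ (sub_eq_zero.mp hroot)
  have hnorm (i : ℕ) : ‖((1 - p : ℝ) : ℂ) * (p : ℂ) ^ (i - 1)‖ = (1 - p) * p ^ (i - 1) := by
    rw [← Complex.ofReal_pow, ← Complex.ofReal_mul, Complex.norm_real,
      Real.norm_of_nonneg (mul_nonneg (sub_nonneg.2 hp1.le) (pow_nonneg hp0.le _))]
  simp only [hnorm, sum_Icc_one_sub_mul_pow_pred]
  linarith [pow_pos hp0 k]

/-- Every complex root of the auxiliary polynomial has absolute value strictly less than 1. -/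
theorem root_abs_lt_one (k : ℕ) (hk : 1 ≤ k) (p q : ℝ) (hp0 : 0 < p) (hp1 : p < 1)
    (hq : q = 1 - p) (lam : ℂ)
    (hroot : lam ^ k - ∑ i ∈ Finset.Icc 1 k, (q : ℂ) * (p : ℂ) ^ (i - 1) * lam ^ (k - i) = 0) :
    ‖lam‖ < 1 :=
  root_abs_lt_one_general k p q hp0 hp1 hq lam hroot
end

section
/- The auxiliary polynomial A(z) = z^k - q z^{k-1} - q p z^{k-2} - ... - q p^{k-1} has k distinct roots (it is separable over ℂ). -/
/-!
Multiplying `A` by `X - p` gives the trinomial `B = X^(k+1) - X^k + q p^k`, so a multiple root `z`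
of `A` is a multiple root of `B`. As `B' = X^(k-1) ((k+1) X - k)` and `B(0) ≠ 0`, this forces
`z = r := k / (k+1)`. Then `r^k (1 - r) = q p^k = p^k (1 - p)`; since `t ↦ t^k (1 - t)` attains its
maximum on `(0, ∞)` only at `r` (Bernoulli's inequality), `p = r = z`. But then `z` is a root of
`X - p` as well as a double root of `A`, hence a triple root of `B`, while
`B''(r) = (k+1) r^(k-1) ≠ 0`.
-/

open Finset Polynomial

section AuxTrinomial

variable {R : Type*} [CommRing R]

lemma eval_derivative_derivative_X_sub_C_mul (a : R) (f : R[X]) :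
    eval a (derivative (derivative ((X - C a) * f))) = 2 * eval a (derivative f) := by
  simp only [derivative_mul, derivative_sub, derivative_X, derivative_C, sub_zero, one_mul,
    derivative_add, zero_mul, eval_add, eval_mul, eval_sub, eval_X, eval_C, sub_self]
  ring

noncomputable def auxTrinomial (k : ℕ) (c : R) : R[X] := X ^ (k + 1) - X ^ k + C c

lemma derivative_auxTrinomial {k : ℕ} (hk : 1 ≤ k) (c : R) :
    derivative (auxTrinomial k c) = X ^ (k - 1) * (C ((k : R) + 1) * X - C (k : R)) := by
  obtain ⟨n, rfl⟩ := Nat.exists_eq_add_of_le' hk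
  simp only [auxTrinomial, derivative_sub, derivative_X_pow, derivative_C,
    Nat.add_sub_cancel, add_zero, Nat.cast_add, Nat.cast_one, map_add, map_one, map_natCast]
  ring

lemma add_one_mul_eq_of_isRoot_auxTrinomial [IsDomain R] {k : ℕ} (hk : 1 ≤ k) {c z : R}
    (hc : c ≠ 0) (h : (auxTrinomial k c).IsRoot z)
    (h' : (derivative (auxTrinomial k c)).IsRoot z) : ((k : R) + 1) * z = k := by
  have hz : z ≠ 0 := by
    rintro rfl
    simp [auxTrinomial, zero_pow (by omega : k ≠ 0), hc] at h
  rw [IsRoot, derivative_auxTrinomial hk, eval_mul, eval_pow, eval_X] at h'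
  simpa [sub_eq_zero, hz] using h'

lemma eval_derivative_derivative_auxTrinomial {k : ℕ} (hk : 1 ≤ k) (c : R) {z : R}
    (hz : ((k : R) + 1) * z = k) :
    eval z (derivative (derivative (auxTrinomial k c))) = ((k : R) + 1) * z ^ (k - 1) := by
  rw [derivative_auxTrinomial hk, derivative_mul]
  simp only [map_add, map_natCast, map_one, derivative_sub, derivative_mul,
    derivative_natCast, derivative_one, add_zero, zero_mul, derivative_X, mul_one, zero_add,
    sub_zero, eval_add, eval_mul, eval_sub, eval_natCast, eval_one, eval_X, hz, sub_self, mul_zero,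
    eval_pow]
  ring

end AuxTrinomial

section AuxPoly

variable {R : Type*} [CommRing R]

noncomputable def auxPoly (k : ℕ) (p q : R) : R[X] :=
  X ^ k - ∑ i ∈ Icc 1 k, C (q * p ^ (i - 1)) * X ^ (k - i)

lemma auxPoly_succ (k : ℕ) (p q : R) :
    auxPoly (k + 1) p q = X * auxPoly k p q - C (q * p ^ k) := by
  have hterm : ∀ i ∈ Icc 1 k, C (q * p ^ (i - 1)) * X ^ (k + 1 - i) =
      X * (C (q * p ^ (i - 1)) * X ^ (k - i)) := fun i hi => by
    rw [Nat.sub_add_comm (mem_Icc.1 hi).2, pow_succ]; ring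
  rw [auxPoly, auxPoly, sum_Icc_succ_top (by omega), sum_congr rfl hterm, ← mul_sum]
  simp only [Nat.add_sub_cancel, Nat.sub_self, pow_zero, mul_one]
  ring

lemma X_sub_C_mul_auxPoly (k : ℕ) {p q : R} (hpq : p + q = 1) :
    (X - C p) * auxPoly k p q = auxTrinomial k (q * p ^ k) := by
  rw [auxTrinomial]
  induction k with
  | zero =>
    have hC : C p + C q = 1 := by rw [← C_add, hpq, C_1]
    simp only [auxPoly, pow_zero, Icc_eq_empty_of_lt zero_lt_one, sum_empty, sub_zero, mul_one,
      zero_add, pow_one]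
    linear_combination -hC
  | succ k ih =>
    rw [auxPoly_succ]
    simp only [C_mul, C_pow] at ih ⊢
    linear_combination X * ih

lemma degree_sum_auxPoly_lt [Nontrivial R] (k : ℕ) (p q : R) :
    (∑ i ∈ Icc 1 k, C (q * p ^ (i - 1)) * X ^ (k - i)).degree < (k : WithBot ℕ) := by
  refine (degree_sum_le _ _).trans_lt ((Finset.sup_lt_iff (WithBot.bot_lt_coe k)).2 fun i hi => ?_)
  exact (degree_C_mul_X_pow_le _ _).trans_lt (Nat.cast_lt.2 (by have := mem_Icc.1 hi; omega))

lemma natDegree_auxPoly [Nontrivial R] (k : ℕ) (p q : R) : (auxPoly k p q).natDegree = k := by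
  refine natDegree_eq_of_degree_eq_some ?_
  rw [auxPoly, degree_sub_eq_left_of_degree_lt] <;> rw [degree_X_pow]
  exact degree_sum_auxPoly_lt k p q

end AuxPoly

lemma pow_mul_one_sub_lt_of_ne {k : ℕ} (hk : 1 ≤ k) {t : ℝ} (ht : 0 < t)
    (hne : t ≠ k / (k + 1)) :
    t ^ k * (1 - t) < (k / (k + 1)) ^ k * (1 - k / (k + 1)) := by
  set r : ℝ := k / (k + 1) with hr_def
  have hk0 : (0 : ℝ) < k := by exact_mod_cast hk
  have hr : ((k : ℝ) + 1) * r = k := by rw [hr_def]; field_simp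
  have hr0 : 0 < r := by positivity
  -- strict Bernoulli inequality for `(r / t) ^ (k + 1)`, as `r / t ≠ 1`
  have hbern : 1 + ((k : ℝ) + 1) * (r / t - 1) < (r / t) ^ (k + 1) := by
    have h := one_add_mul_self_lt_rpow_one_add (s := r / t - 1) (p := (k : ℝ) + 1)
      (by linarith [div_pos hr0 ht])
      (by rw [sub_ne_zero, ne_eq, div_eq_one_iff_eq ht.ne']; exact Ne.symm hne)
      (by linarith)
    rw [add_sub_cancel, ← Nat.cast_add_one, Real.rpow_natCast] at h
    exact_mod_cast h
  have hscaled : ((k : ℝ) + 1) * r * t ^ k - k * t ^ (k + 1) < r ^ (k + 1) := by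
    have := mul_lt_mul_of_pos_right hbern (pow_pos ht (k + 1))
    rw [div_pow, div_mul_cancel₀ _ (pow_ne_zero _ ht.ne'), pow_succ] at this
    field_simp at this
    linear_combination this
  refine lt_of_mul_lt_mul_left ?_ hk0.le
  calc (k : ℝ) * (t ^ k * (1 - t)) = ((k : ℝ) + 1) * r * t ^ k - k * t ^ (k + 1) := by
        rw [hr]; ring
    _ < r ^ (k + 1) := hscaled
    _ = k * (r ^ k * (1 - r)) := by linear_combination r ^ k * hr

lemma eq_of_isRoot_auxTrinomial {k : ℕ} (hk : 1 ≤ k) {p q : ℝ} (hp : 0 < p) (hpq : p + q = 1)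
    (h : (auxTrinomial k (q * p ^ k)).IsRoot (k / (k + 1))) : p = k / (k + 1) := by
  by_contra hne
  refine (pow_mul_one_sub_lt_of_ne hk hp hne).ne ?_
  simp only [IsRoot, auxTrinomial, eval_add, eval_sub, eval_pow, eval_X, eval_C] at h
  linear_combination h - p ^ k * hpq

theorem auxPoly_separable {k : ℕ} (hk : 1 ≤ k) {p q : ℝ} (hp : 0 < p) (hq : 0 < q)
    (hpq : p + q = 1) : (auxPoly k (p : ℂ) (q : ℂ)).Separable := by
  set A := auxPoly k (p : ℂ) (q : ℂ)
  have hAB : (X - C (p : ℂ)) * A = auxTrinomial k ((q : ℂ) * (p : ℂ) ^ k) :=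
    X_sub_C_mul_auxPoly k (by exact_mod_cast hpq)
  rw [separable_def, isCoprime_iff_aeval_ne_zero_of_isAlgClosed ℂ ℂ]
  intro z
  by_contra! h
  simp only [coe_aeval_eq_eval] at h
  obtain ⟨hA, hA'⟩ := h
  have hB : (auxTrinomial k ((q : ℂ) * (p : ℂ) ^ k)).IsRoot z := by
    rw [IsRoot, ← hAB, eval_mul, hA, mul_zero]
  have hB' : (derivative (auxTrinomial k ((q : ℂ) * (p : ℂ) ^ k))).IsRoot z := by
    rw [IsRoot, ← hAB, derivative_mul, eval_add, eval_mul, eval_mul, hA, hA', mul_zero, mul_zero,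
      add_zero]
  have hp0 : (p : ℂ) ≠ 0 := by exact_mod_cast hp.ne'
  have hc : (q : ℂ) * (p : ℂ) ^ k ≠ 0 := mul_ne_zero (by exact_mod_cast hq.ne') (pow_ne_zero _ hp0)
  have hz := add_one_mul_eq_of_isRoot_auxTrinomial hk hc hB hB'
  have hzr : z = ((k / (k + 1) : ℝ) : ℂ) := by
    push_cast
    rw [eq_div_iff (Nat.cast_add_one_ne_zero k), mul_comm, hz]
  have hpr : p = k / (k + 1) := by
    refine eq_of_isRoot_auxTrinomial hk hp hpq ?_
    simp only [IsRoot, auxTrinomial, eval_add, eval_sub, eval_pow, eval_X, eval_C, hzr] at hB ⊢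
    exact_mod_cast hB
  have hzp : z = p := by rw [hzr, hpr]
  have h2 := eval_derivative_derivative_auxTrinomial hk ((q : ℂ) * (p : ℂ) ^ k) hz
  rw [← hAB, hzp, eval_derivative_derivative_X_sub_C_mul, ← hzp, hA', mul_zero] at h2
  exact mul_ne_zero (Nat.cast_add_one_ne_zero k) (pow_ne_zero _ (hzp ▸ hp0)) h2.symm

/-- The auxiliary polynomial `A(z) = z^k - q z^{k-1} - ... - q p^{k-1}` has `k`
distinct complex roots. -/
theorem aux_poly_separable (k : ℕ) (hk : 1 ≤ k) (p q : ℝ) (hp0 : 0 < p) (hp1 : p < 1)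
    (hq : q = 1 - p) :
    ((X ^ k - ∑ i ∈ Finset.Icc 1 k,
        C ((q : ℂ) * (p : ℂ) ^ (i - 1)) * X ^ (k - i) : Polynomial ℂ)).roots.toFinset.card
      = k := by
  change (auxPoly k (p : ℂ) (q : ℂ)).roots.toFinset.card = k
  have hsep := auxPoly_separable hk hp0 (by linarith) (by linarith)
  rw [Multiset.toFinset_card_of_nodup (nodup_roots hsep), IsAlgClosed.card_roots_eq_natDegree,
    natDegree_auxPoly]
end

section
/- For r ≥ 1, the r-th factorial moment of the geometric distribution of order k satisfies μ_(r) = E[N_k (N_k - 1) ⋯ (N_k - r + 1)] = r! · f_k((r+1)k + r) / (q p^k)^{r+1}. -/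
open Finset

attribute [local instance] Classical.propDecidable

namespace RunAux

/-- weight of a string -/
noncomputable def W (p : ℝ) (n : ℕ) (ω : Fin n → Bool) : ℝ :=
  ∏ i, (if ω i then p else (1 - p))

lemma weight_eq (p : ℝ) (n : ℕ) (ω : Fin n → Bool) :
    p ^ (Finset.univ.filter (fun i => ω i = true)).card *
      (1 - p) ^ (Finset.univ.filter (fun i => ω i = false)).card = W p n ω := by
  rw [W]
  rw [Finset.prod_ite (fun _ => p) (fun _ => (1-p))]
  simp [Finset.prod_const, Bool.not_eq_true]

lemma fk_eq (k : ℕ) (p : ℝ) (n : ℕ) :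
    fk k p n = ∑ ω ∈ Finset.univ.filter (fun ω : Fin n → Bool => firstRun k n ω), W p n ω := by
  rw [fk]
  exact Finset.sum_congr rfl fun ω _ => weight_eq p n ω

lemma W_nonneg {p : ℝ} (hp0 : 0 ≤ p) (hp1 : p ≤ 1) (n : ℕ) (ω : Fin n → Bool) :
    0 ≤ W p n ω := by
  apply Finset.prod_nonneg
  intro i _
  split <;> linarith

lemma sum_W_univ (p : ℝ) (n : ℕ) : ∑ ω : Fin n → Bool, W p n ω = 1 := by
  have h := Finset.prod_univ_sum (fun _ : Fin n => (Finset.univ : Finset Bool))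
    (fun _ b => if b then p else (1-p))
  rw [Fintype.piFinset_univ] at h
  have : ∑ ω : Fin n → Bool, W p n ω
      = ∑ ω : Fin n → Bool, ∏ i, (if ω i then p else (1-p)) := rfl
  rw [this, ← h]
  have : ∀ i : Fin n, (∑ b : Bool, if b then p else (1-p)) = 1 := by
    intro i; rw [Fintype.sum_bool]; simp
  rw [Finset.prod_congr rfl (fun i _ => this i)]
  simp

lemma sum_W_le_one {p : ℝ} (hp0 : 0 ≤ p) (hp1 : p ≤ 1) (n : ℕ)
    (P : (Fin n → Bool) → Prop) [DecidablePred P] :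
    ∑ ω ∈ Finset.univ.filter P, W p n ω ≤ 1 := by
  rw [← sum_W_univ p n]
  exact Finset.sum_le_sum_of_subset_of_nonneg (Finset.filter_subset _ _)
    (fun ω _ _ => W_nonneg hp0 hp1 n ω)

lemma W_append (p : ℝ) (m l : ℕ) (σ : Fin m → Bool) (τ : Fin l → Bool) :
    W p (m + l) (Fin.append σ τ) = W p m σ * W p l τ := by
  rw [W, Fin.prod_univ_add]
  congr 1 <;> apply Finset.prod_congr rfl <;> intro i _
  · rw [Fin.append_left]
  · rw [Fin.append_right]

lemma append_decomp (m l : ℕ) (ω : Fin (m + l) → Bool) :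
    ω = Fin.append (fun i => ω (Fin.castAdd l i)) (fun i => ω (Fin.natAdd m i)) := by
  funext i
  refine Fin.addCases (fun j => ?_) (fun j => ?_) i
  · rw [Fin.append_left]
  · rw [Fin.append_right]

/-- transport a filtered sum over strings of length `m+l` to pairs -/
lemma sum_W_append (p : ℝ) (m l : ℕ) (P : (Fin (m + l) → Bool) → Prop) [DecidablePred P] :
    ∑ ω ∈ Finset.univ.filter P, W p (m + l) ω
      = ∑ στ ∈ Finset.univ.filter
          (fun στ : (Fin m → Bool) × (Fin l → Bool) => P (Fin.append στ.1 στ.2)),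
          W p m στ.1 * W p l στ.2 := by
  refine Finset.sum_nbij'
    (fun ω => (fun i => ω (Fin.castAdd l i), fun i => ω (Fin.natAdd m i)))
    (fun στ => Fin.append στ.1 στ.2) ?_ ?_ ?_ ?_ ?_
  · intro ω hω
    simp only [Finset.mem_filter, Finset.mem_univ, true_and] at hω ⊢
    rw [← append_decomp]; exact hω
  · intro στ hστ
    simp only [Finset.mem_filter, Finset.mem_univ, true_and] at hστ ⊢
    exact hστ
  · intro ω _
    exact (append_decomp m l ω).symm
  · intro στ _
    exact Prod.ext (funext fun i => Fin.append_left _ _ _) (funext fun i => Fin.append_right _ _ _)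
  · intro ω hω
    rw [← W_append, ← append_decomp]

lemma sum_W_split (p : ℝ) (m l : ℕ) (P : (Fin (m + l) → Bool) → Prop)
    (Q : (Fin m → Bool) → Prop) (R : (Fin l → Bool) → Prop)
    [DecidablePred P] [DecidablePred Q] [DecidablePred R]
    (h : ∀ σ τ, P (Fin.append σ τ) ↔ Q σ ∧ R τ) :
    ∑ ω ∈ Finset.univ.filter P, W p (m + l) ω
      = (∑ σ ∈ Finset.univ.filter Q, W p m σ) * (∑ τ ∈ Finset.univ.filter R, W p l τ) := by
  rw [sum_W_append]
  have hpred : Finset.univ.filter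
        (fun στ : (Fin m → Bool) × (Fin l → Bool) => P (Fin.append στ.1 στ.2))
      = Finset.univ.filter (fun στ => Q στ.1 ∧ R στ.2) :=
    Finset.filter_congr (fun στ _ => h στ.1 στ.2)
  rw [hpred, ← Finset.univ_product_univ, Finset.filter_product,
    Finset.sum_product, ← Finset.sum_mul_sum]

lemma sum_W_split_le {p : ℝ} (hp0 : 0 ≤ p) (hp1 : p ≤ 1) (m l : ℕ)
    (P : (Fin (m + l) → Bool) → Prop)
    (Q : (Fin m → Bool) → Prop) (R : (Fin l → Bool) → Prop)
    [DecidablePred P] [DecidablePred Q] [DecidablePred R]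
    (h : ∀ σ τ, P (Fin.append σ τ) → Q σ ∧ R τ) :
    ∑ ω ∈ Finset.univ.filter P, W p (m + l) ω
      ≤ (∑ σ ∈ Finset.univ.filter Q, W p m σ) * (∑ τ ∈ Finset.univ.filter R, W p l τ) := by
  rw [sum_W_append, Finset.sum_mul_sum, ← Finset.sum_product' _ _ (fun σ τ => W p m σ * W p l τ)]
  apply Finset.sum_le_sum_of_subset_of_nonneg
  · intro στ hστ
    simp only [Finset.mem_filter, Finset.mem_univ, true_and] at hστ
    rw [Finset.mem_product]
    simp only [Finset.mem_filter, Finset.mem_univ, true_and]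
    exact h στ.1 στ.2 hστ
  · intro στ _ _
    exact mul_nonneg (W_nonneg hp0 hp1 _ _) (W_nonneg hp0 hp1 _ _)

end RunAux

namespace RunAux

lemma append_val_lt {a b : ℕ} (σ : Fin a → Bool) (τ : Fin b → Bool) (j : Fin (a + b))
    (hj : (j : ℕ) < a) : Fin.append σ τ j = σ ⟨j, hj⟩ := by
  have h : j = Fin.castAdd b ⟨j, hj⟩ := by ext; simp
  exact (congrArg (Fin.append σ τ) h).trans (Fin.append_left σ τ ⟨j, hj⟩)

lemma append_val_ge {a b : ℕ} (σ : Fin a → Bool) (τ : Fin b → Bool) (j : Fin (a + b))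
    (hj : a ≤ (j : ℕ)) : Fin.append σ τ j = τ ⟨(j : ℕ) - a, by have := j.isLt; omega⟩ := by
  have h : j = Fin.natAdd a ⟨(j : ℕ) - a, by have := j.isLt; omega⟩ := by
    ext; simp [Nat.add_sub_cancel' hj]
  exact (congrArg (Fin.append σ τ) h).trans (Fin.append_right σ τ _)

lemma hasRunEnd_append_iff {k a b : ℕ} (σ : Fin a → Bool) (τ : Fin b → Bool) {m : ℕ}
    (hm : m ≤ a) :
    hasRunEnd k (a + b) (Fin.append σ τ) m ↔ hasRunEnd k a σ m := by
  constructor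
  · rintro ⟨h1, h2, h3⟩
    refine ⟨h1, hm, fun j hj1 hj2 => ?_⟩
    have hja : (j : ℕ) < a + b := by have := j.isLt; omega
    have hj : (j : ℕ) < a := lt_of_lt_of_le hj2 hm
    have := h3 ⟨j, hja⟩ hj1 hj2
    rw [append_val_lt σ τ ⟨j, hja⟩ hj] at this
    simpa using this
  · rintro ⟨h1, h2, h3⟩
    refine ⟨h1, by omega, fun j hj1 hj2 => ?_⟩
    have hja : (j : ℕ) < a := lt_of_lt_of_le hj2 hm
    rw [append_val_lt σ τ j hja]
    exact h3 ⟨j, hja⟩ hj1 hj2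

def NoRun (k n : ℕ) (ω : Fin n → Bool) : Prop := ∀ m, ¬ hasRunEnd k n ω m

noncomputable def U (k : ℕ) (p : ℝ) (n : ℕ) : ℝ :=
  ∑ ω ∈ Finset.univ.filter (NoRun k n), W p n ω

/-- consistency: the event "first run ends at `m`" in a string of length `m + l`
has weight `fk k p m`. -/
lemma sum_FRA (k : ℕ) (p : ℝ) (m l : ℕ) :
    ∑ ω ∈ Finset.univ.filter
      (fun ω : Fin (m + l) → Bool =>
        hasRunEnd k (m + l) ω m ∧ ∀ j < m, ¬ hasRunEnd k (m + l) ω j),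
      W p (m + l) ω = fk k p m := by
  have hiff : ∀ (σ : Fin m → Bool) (τ : Fin l → Bool),
      (hasRunEnd k (m + l) (Fin.append σ τ) m ∧
        ∀ j < m, ¬ hasRunEnd k (m + l) (Fin.append σ τ) j)
      ↔ firstRun k m σ ∧ True := by
    intro σ τ
    rw [firstRun]
    constructor
    · rintro ⟨h1, h2⟩
      refine ⟨⟨(hasRunEnd_append_iff σ τ le_rfl).1 h1, fun j hj hr => ?_⟩, trivial⟩
      exact h2 j hj ((hasRunEnd_append_iff σ τ (le_of_lt hj)).2 hr)
    · rintro ⟨⟨h1, h2⟩, -⟩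
      refine ⟨(hasRunEnd_append_iff σ τ le_rfl).2 h1, fun j hj hr => ?_⟩
      exact h2 j hj ((hasRunEnd_append_iff σ τ (le_of_lt hj)).1 hr)
  have h2 := sum_W_split p m l
      (fun ω => hasRunEnd k (m + l) ω m ∧ ∀ j < m, ¬ hasRunEnd k (m + l) ω j)
      (fun σ => firstRun k m σ) (fun _ => True) hiff
  rw [Finset.filter_true, sum_W_univ, mul_one] at h2
  rw [fk_eq]
  exact h2

lemma fiber_eq_fk (k : ℕ) (p : ℝ) {m n : ℕ} (hm : m ≤ n) :
    ∑ ω ∈ Finset.univ.filter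
      (fun ω : Fin n → Bool => hasRunEnd k n ω m ∧ ∀ j < m, ¬ hasRunEnd k n ω j),
      W p n ω = fk k p m := by
  obtain ⟨l, rfl⟩ := Nat.exists_eq_add_of_le hm
  exact sum_FRA k p m l

/-- position of the first run end, or `n+1` if there is none -/
noncomputable def firstIdx (k n : ℕ) (ω : Fin n → Bool) : ℕ :=
  if h : ∃ m, hasRunEnd k n ω m then Nat.find h else n + 1

lemma firstIdx_pos {k n : ℕ} {ω : Fin n → Bool} (h : ∃ m, hasRunEnd k n ω m) :
    firstIdx k n ω = Nat.find h := dif_pos h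

lemma firstIdx_neg {k n : ℕ} {ω : Fin n → Bool} (h : ¬ ∃ m, hasRunEnd k n ω m) :
    firstIdx k n ω = n + 1 := dif_neg h

lemma sum_range_fk (k : ℕ) (p : ℝ) (n : ℕ) :
    ∑ m ∈ range (n + 1), fk k p m = 1 - U k p n := by
  have hmaps : ∀ ω ∈ (Finset.univ : Finset (Fin n → Bool)),
      firstIdx k n ω ∈ range (n + 2) := by
    intro ω _
    rw [Finset.mem_range]
    by_cases h : ∃ m, hasRunEnd k n ω m
    · rw [firstIdx_pos h]
      have := (Nat.find_spec h).2.1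
      omega
    · rw [firstIdx_neg h]; omega
  have htot := Finset.sum_fiberwise_of_maps_to hmaps (W p n)
  rw [sum_W_univ] at htot
  rw [Finset.sum_range_succ] at htot
  have hlast : ∑ ω ∈ Finset.univ.filter (fun ω => firstIdx k n ω = n + 1), W p n ω
      = U k p n := by
    rw [U]
    congr 1
    apply Finset.filter_congr
    intro ω _
    constructor
    · intro hgw m hr
      have h : ∃ m, hasRunEnd k n ω m := ⟨m, hr⟩
      rw [firstIdx_pos h] at hgw
      have := (Nat.find_spec h).2.1
      omega
    · intro hNR
      rw [firstIdx_neg]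
      rintro ⟨m, hr⟩
      exact hNR m hr
  have hfib : ∀ m ∈ range (n + 1),
      ∑ ω ∈ Finset.univ.filter (fun ω => firstIdx k n ω = m), W p n ω = fk k p m := by
    intro m hmr
    rw [Finset.mem_range] at hmr
    rw [← fiber_eq_fk k p (show m ≤ n by omega)]
    congr 1
    apply Finset.filter_congr
    intro ω _
    constructor
    · intro hgw
      by_cases h : ∃ m, hasRunEnd k n ω m
      · rw [firstIdx_pos h, Nat.find_eq_iff] at hgw
        exact ⟨hgw.1, fun j hj => hgw.2 j hj⟩
      · rw [firstIdx_neg h] at hgw; omega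
    · rintro ⟨h1, h2⟩
      have h : ∃ m, hasRunEnd k n ω m := ⟨m, h1⟩
      rw [firstIdx_pos h, Nat.find_eq_iff]
      exact ⟨h1, fun j hj => h2 j hj⟩
  rw [Finset.sum_congr rfl hfib, hlast] at htot
  linarith

end RunAux

namespace RunAux

def tau0 (k : ℕ) : Fin (k + 1) → Bool := fun i => decide (0 < (i : ℕ))

lemma sum_R (p : ℝ) (k : ℕ) :
    ∑ τ ∈ Finset.univ.filter
      (fun τ : Fin (k + 1) → Bool => τ 0 = false ∧ ∀ i : Fin (k + 1), 0 < (i : ℕ) → τ i = true),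
      W p (k + 1) τ = (1 - p) * p ^ k := by
  have hfilter : Finset.univ.filter
      (fun τ : Fin (k + 1) → Bool => τ 0 = false ∧ ∀ i : Fin (k + 1), 0 < (i : ℕ) → τ i = true)
      = {tau0 k} := by
    ext τ
    simp only [Finset.mem_filter, Finset.mem_univ, true_and, Finset.mem_singleton]
    constructor
    · rintro ⟨h0, h1⟩
      funext i
      rcases Nat.eq_zero_or_pos (i : ℕ) with h | h
      · have hi0 : i = 0 := Fin.ext h
        rw [hi0, h0, tau0]
        simp
      · rw [h1 i h, tau0]
        simp [h]
    · rintro rfl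
      refine ⟨by simp [tau0], fun i hi => by simp [tau0, hi]⟩
  rw [hfilter, Finset.sum_singleton, W, Fin.prod_univ_succ]
  have h0 : tau0 k 0 = false := by simp [tau0]
  have hs : ∀ i : Fin k, tau0 k i.succ = true := by
    intro i; simp [tau0]
  rw [h0]
  simp only [hs]
  simp [Finset.prod_const]

lemma fk_succ (k : ℕ) (p : ℝ) (l : ℕ) :
    fk k p (l + (k + 1)) = U k p l * ((1 - p) * p ^ k) := by
  have hiff : ∀ (σ : Fin l → Bool) (τ : Fin (k + 1) → Bool),
      firstRun k (l + (k + 1)) (Fin.append σ τ)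
      ↔ NoRun k l σ ∧ (τ 0 = false ∧ ∀ i : Fin (k + 1), 0 < (i : ℕ) → τ i = true) := by
    intro σ τ
    constructor
    · rintro ⟨hN, hF⟩
      refine ⟨?_, ?_, ?_⟩
      · intro m hr
        have hm : m ≤ l := hr.2.1
        exact hF m (by omega) ((hasRunEnd_append_iff σ τ hm).2 hr)
      · by_contra h0
        rw [Bool.not_eq_false] at h0
        apply hF (l + k) (by omega)
        refine ⟨by omega, by omega, fun j hj1 hj2 => ?_⟩
        have hjl : l ≤ (j : ℕ) := by omega
        rw [append_val_ge σ τ j hjl]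
        by_cases hje : (j : ℕ) = l
        · simp only [show (j : ℕ) - l = 0 by omega, Fin.mk_zero]
          exact h0
        · have hh := hN.2.2 j (by omega) (by have := j.isLt; omega)
          rw [append_val_ge σ τ j hjl] at hh
          exact hh
      · intro i hi
        have hv : ((Fin.natAdd l i : Fin (l + (k + 1))) : ℕ) = l + i := rfl
        have hh := hN.2.2 (Fin.natAdd l i)
          (by rw [hv]; omega) (by rw [hv]; have := i.isLt; omega)
        rwa [Fin.append_right] at hh
    · rintro ⟨hNR, h0, hrest⟩
      constructor
      · refine ⟨by omega, le_rfl, fun j hj1 hj2 => ?_⟩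
        have hjl : l + 1 ≤ (j : ℕ) := by omega
        rw [append_val_ge σ τ j (by omega)]
        exact hrest _ (by show 0 < (j : ℕ) - l; omega)
      · intro m hmn hr
        by_cases hml : m ≤ l
        · exact hNR m ((hasRunEnd_append_iff σ τ hml).1 hr)
        · have hkm : k ≤ m := hr.1
          have hl_lt : l < l + (k + 1) := by omega
          have hl := hr.2.2 ⟨l, hl_lt⟩ (by show m - k ≤ l; omega) (by show l < m; omega)
          rw [append_val_ge σ τ ⟨l, hl_lt⟩ (le_refl l)] at hl
          simp [h0] at hl
  rw [fk_eq]
  rw [sum_W_split p l (k + 1) (fun ω => firstRun k (l + (k + 1)) ω) (NoRun k l)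
    (fun τ => τ 0 = false ∧ ∀ i : Fin (k + 1), 0 < (i : ℕ) → τ i = true) hiff]
  rw [sum_R, U]

lemma U_nonneg {p : ℝ} (hp0 : 0 ≤ p) (hp1 : p ≤ 1) (k n : ℕ) : 0 ≤ U k p n :=
  Finset.sum_nonneg fun ω _ => W_nonneg hp0 hp1 n ω

lemma U_le_one {p : ℝ} (hp0 : 0 ≤ p) (hp1 : p ≤ 1) (k n : ℕ) : U k p n ≤ 1 :=
  sum_W_le_one hp0 hp1 n _

lemma sum_not_allTrue (p : ℝ) (k : ℕ) :
    ∑ τ ∈ Finset.univ.filter (fun τ : Fin k → Bool => ¬ ∀ i, τ i = true), W p k τ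
      = 1 - p ^ k := by
  have htot := Finset.sum_filter_add_sum_filter_not Finset.univ
    (fun τ : Fin k → Bool => ∀ i, τ i = true) (W p k)
  rw [sum_W_univ] at htot
  have hall : ∑ τ ∈ Finset.univ.filter (fun τ : Fin k → Bool => ∀ i, τ i = true), W p k τ
      = p ^ k := by
    have hf : Finset.univ.filter (fun τ : Fin k → Bool => ∀ i, τ i = true)
        = {fun _ => true} := by
      ext τ
      simp only [Finset.mem_filter, Finset.mem_univ, true_and, Finset.mem_singleton]
      constructor
      · intro h; funext i; exact h i
      · rintro rfl i; rfl
    rw [hf, Finset.sum_singleton, W]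
    simp [Finset.prod_const]
  linarith

lemma U_rec {p : ℝ} (hp0 : 0 ≤ p) (hp1 : p ≤ 1) (k m : ℕ) :
    U k p (m + k) ≤ U k p m * (1 - p ^ k) := by
  rw [U, ← sum_not_allTrue p k]
  have himp : ∀ (σ : Fin m → Bool) (τ : Fin k → Bool),
      NoRun k (m + k) (Fin.append σ τ) → NoRun k m σ ∧ ¬ ∀ i, τ i = true := by
    intro σ τ hNR
    constructor
    · intro m' hr
      exact hNR m' ((hasRunEnd_append_iff σ τ hr.2.1).2 hr)
    · intro hall
      apply hNR (m + k)
      refine ⟨by omega, le_rfl, fun j hj1 hj2 => ?_⟩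
      have hjm : m ≤ (j : ℕ) := by omega
      rw [append_val_ge σ τ j hjm]
      exact hall _
  exact sum_W_split_le hp0 hp1 m k (NoRun k (m + k)) (NoRun k m)
    (fun τ => ¬ ∀ i, τ i = true) himp

lemma U_le_pow {p : ℝ} (hp0 : 0 ≤ p) (hp1 : p ≤ 1) (k : ℕ) (hk : 1 ≤ k) (m : ℕ) :
    U k p m ≤ (1 - p ^ k) ^ (m / k) := by
  have hc0 : 0 ≤ 1 - p ^ k := by
    have hpk : p ^ k ≤ 1 := pow_le_one₀ hp0 hp1
    linarith
  induction m using Nat.strong_induction_on with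
  | _ m ih =>
    by_cases hmk : m < k
    · rw [Nat.div_eq_of_lt hmk, pow_zero]
      exact U_le_one hp0 hp1 k m
    · push_neg at hmk
      have hm : m = (m - k) + k := by omega
      have h1 : U k p m ≤ U k p (m - k) * (1 - p ^ k) := by
        have h1x := U_rec hp0 hp1 k (m - k)
        rw [← hm] at h1x
        exact h1x
      have h2 : U k p (m - k) ≤ (1 - p ^ k) ^ ((m - k) / k) := ih (m - k) (by omega)
      have h3 : m / k = (m - k) / k + 1 := by
        rw [Nat.div_eq_sub_div (by omega) hmk]
      rw [h3, pow_succ]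
      calc U k p m ≤ U k p (m - k) * (1 - p ^ k) := h1
        _ ≤ (1 - p ^ k) ^ ((m - k) / k) * (1 - p ^ k) :=
            mul_le_mul_of_nonneg_right h2 hc0

lemma U_tendsto {p : ℝ} (hp0 : 0 < p) (hp1 : p < 1) (k : ℕ) (hk : 1 ≤ k) :
    Filter.Tendsto (fun m => U k p m) Filter.atTop (nhds 0) := by
  have hc0 : 0 ≤ 1 - p ^ k := by
    have hpk : p ^ k ≤ 1 := pow_le_one₀ hp0.le hp1.le
    linarith
  have hc1 : 1 - p ^ k < 1 := by
    have := pow_pos hp0 k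
    linarith
  have hdiv : Filter.Tendsto (fun m : ℕ => m / k) Filter.atTop Filter.atTop := by
    apply Filter.tendsto_atTop_atTop.2
    intro b
    exact ⟨b * k, fun a ha => (Nat.le_div_iff_mul_le (by omega)).2 ha⟩
  have hpow : Filter.Tendsto (fun j : ℕ => (1 - p ^ k) ^ j) Filter.atTop (nhds 0) :=
    tendsto_pow_atTop_nhds_zero_of_lt_one hc0 hc1
  have hcomp := hpow.comp hdiv
  refine tendsto_of_tendsto_of_tendsto_of_le_of_le tendsto_const_nhds hcomp ?_ ?_
  · intro m; exact U_nonneg hp0.le hp1.le k m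
  · intro m; exact U_le_pow hp0.le hp1.le k hk m

lemma fk_nonneg {p : ℝ} (hp0 : 0 ≤ p) (hp1 : p ≤ 1) (k n : ℕ) : 0 ≤ fk k p n := by
  rw [fk_eq]
  exact Finset.sum_nonneg fun ω _ => W_nonneg hp0 hp1 n ω

lemma fk_summable {p : ℝ} (hp0 : 0 ≤ p) (hp1 : p ≤ 1) (k : ℕ) : Summable (fk k p) := by
  apply summable_of_sum_range_le (c := 1) (fun n => fk_nonneg hp0 hp1 k n)
  intro n
  cases n with
  | zero => simp
  | succ n =>
    rw [sum_range_fk]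
    have := U_nonneg hp0 hp1 k n
    linarith

lemma fk_tsum_one {p : ℝ} (hp0 : 0 < p) (hp1 : p < 1) (k : ℕ) (hk : 1 ≤ k) :
    ∑' n, fk k p n = 1 := by
  have hs := fk_summable hp0.le hp1.le k
  have h1 : Filter.Tendsto (fun n => ∑ m ∈ range (n + 1), fk k p m)
      Filter.atTop (nhds (∑' n, fk k p n)) :=
    hs.hasSum.tendsto_sum_nat.comp (Filter.tendsto_add_atTop_nat 1)
  have h2 : Filter.Tendsto (fun n => ∑ m ∈ range (n + 1), fk k p m)
      Filter.atTop (nhds 1) := by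
    simp only [sum_range_fk]
    have := (tendsto_const_nhds (x := (1:ℝ)) (f := Filter.atTop (α := ℕ))).sub
      (U_tendsto hp0 hp1 k hk)
    simpa using this
  exact tendsto_nhds_unique h1 h2

lemma tail_eq_U {p : ℝ} (hp0 : 0 < p) (hp1 : p < 1) (k : ℕ) (hk : 1 ≤ k)
    {m : ℕ} (hm : 1 ≤ m) :
    ∑' j, fk k p (m + j) = U k p (m - 1) := by
  have hs := fk_summable hp0.le hp1.le k
  have h := Summable.sum_add_tsum_nat_add (f := fk k p) m hs
  rw [fk_tsum_one hp0 hp1 k hk] at h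
  have hr : ∑ i ∈ range m, fk k p i = 1 - U k p (m - 1) := by
    have hm1 : m = (m - 1) + 1 := by omega
    conv_lhs => rw [hm1]
    rw [sum_range_fk]
  have hshift : ∑' (j : ℕ), fk k p (m + j) = ∑' (j : ℕ), fk k p (j + m) := by
    apply tsum_congr; intro j; rw [Nat.add_comm]
  rw [hshift]
  linarith

/-- The fundamental recurrence: `f(m+k) = q p^k P(N ≥ m)` for `m ≥ 1`. -/
lemma key_rec {p : ℝ} (hp0 : 0 < p) (hp1 : p < 1) (k : ℕ) (hk : 1 ≤ k)
    {m : ℕ} (hm : 1 ≤ m) :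
    fk k p (m + k) = ((1 - p) * p ^ k) * ∑' j, fk k p (m + j) := by
  rw [tail_eq_U hp0 hp1 k hk hm]
  have h : m + k = (m - 1) + (k + 1) := by omega
  rw [h, fk_succ]
  ring

end RunAux

namespace RunAux

open ENNReal

lemma enn_tsum_shift (g : ℕ → ℝ≥0∞) (i : ℕ) (h0 : ∀ n < i, g n = 0) :
    ∑' n, g n = ∑' d, g (i + d) := by
  refine (Function.Injective.tsum_eq (g := fun d => i + d) (add_right_injective i) ?_).symm
  intro n hn
  rw [Function.mem_support] at hn
  rcases le_or_gt i n with h | h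
  · exact ⟨n - i, by show i + (n - i) = n; omega⟩
  · exact absurd (h0 n h) hn

lemma choose_sum (s j : ℕ) :
    ∑ i ∈ range (j + 1), (i + s).choose s = (j + s + 1).choose (s + 1) := by
  induction j with
  | zero => simp
  | succ j ih =>
    rw [Finset.sum_range_succ, ih]
    have h1 : j + 1 + s = j + s + 1 := by omega
    rw [h1]
    have h2 := Nat.choose_succ_succ (j + s + 1) s
    simp only [Nat.succ_eq_add_one] at h2
    omega

noncomputable def F (k : ℕ) (p : ℝ) (n : ℕ) : ℝ≥0∞ := ENNReal.ofReal (fk k p n)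

noncomputable def Tl (k : ℕ) (p : ℝ) (t : ℕ) : ℝ≥0∞ := ∑' j, F k p (t + j)

noncomputable def B (k : ℕ) (p : ℝ) (s m : ℕ) : ℝ≥0∞ :=
  ∑' j, ((j + s).choose s : ℝ≥0∞) * F k p (m + j)

lemma tail_summable {p : ℝ} (hp0 : 0 ≤ p) (hp1 : p ≤ 1) (k t : ℕ) :
    Summable (fun j => fk k p (t + j)) := by
  have h := (summable_nat_add_iff t).2 (fk_summable hp0 hp1 k)
  have he : (fun j => fk k p (t + j)) = fun j => fk k p (j + t) := by
    funext j; rw [Nat.add_comm]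
  rw [he]
  exact h

lemma Tl_eq {p : ℝ} (hp0 : 0 ≤ p) (hp1 : p ≤ 1) (k t : ℕ) :
    Tl k p t = ENNReal.ofReal (∑' j, fk k p (t + j)) := by
  rw [Tl, ENNReal.ofReal_tsum_of_nonneg (fun j => fk_nonneg hp0 hp1 k _)
    (tail_summable hp0 hp1 k t)]
  rfl

lemma F_key {p : ℝ} (hp0 : 0 < p) (hp1 : p < 1) (k : ℕ) (hk : 1 ≤ k)
    {m : ℕ} (hm : 1 ≤ m) :
    F k p (m + k) = ENNReal.ofReal ((1 - p) * p ^ k) * Tl k p m := by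
  rw [F, key_rec hp0 hp1 k hk hm, ENNReal.ofReal_mul
    (mul_nonneg (by linarith) (pow_nonneg hp0.le k)), Tl_eq hp0.le hp1.le]

lemma B_step {p : ℝ} (hp0 : 0 < p) (hp1 : p < 1) (k : ℕ) (hk : 1 ≤ k)
    (s : ℕ) {m : ℕ} (hm : 1 ≤ m) :
    ENNReal.ofReal ((1 - p) * p ^ k) * B k p (s + 1) m = B k p s (m + k) := by
  have h1 : B k p (s + 1) m = ∑' i, ((i + s).choose s : ℝ≥0∞) * Tl k p (m + i) := by
    rw [B]
    have hrw : ∀ j : ℕ, ((j + (s + 1)).choose (s + 1) : ℝ≥0∞) * F k p (m + j)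
        = ∑' i, (if i ≤ j then ((i + s).choose s : ℝ≥0∞) * F k p (m + j) else 0) := by
      intro j
      rw [show j + (s + 1) = j + s + 1 by omega]
      rw [tsum_eq_sum (s := range (j + 1))
        (fun i hi => if_neg (by rw [Finset.mem_range] at hi; omega))]
      rw [Finset.sum_congr rfl
        (fun i hi => if_pos (by rw [Finset.mem_range] at hi; omega))]
      rw [← Finset.sum_mul, ← Nat.cast_sum, choose_sum]
    calc B k p (s + 1) m
        = ∑' j, ∑' i, (if i ≤ j then ((i + s).choose s : ℝ≥0∞) * F k p (m + j) else 0) :=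
          tsum_congr hrw
      _ = ∑' i, ∑' j, (if i ≤ j then ((i + s).choose s : ℝ≥0∞) * F k p (m + j) else 0) :=
          ENNReal.tsum_comm
      _ = ∑' i, ((i + s).choose s : ℝ≥0∞) * ∑' j, (if i ≤ j then F k p (m + j) else 0) := by
          refine tsum_congr fun i => ?_
          rw [← ENNReal.tsum_mul_left]
          refine tsum_congr fun j => ?_
          split_ifs <;> simp
      _ = ∑' i, ((i + s).choose s : ℝ≥0∞) * Tl k p (m + i) := by
          refine tsum_congr fun i => ?_
          congr 1
          rw [enn_tsum_shift _ i (fun n hn => if_neg (by omega)), Tl]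
          refine tsum_congr fun d => ?_
          rw [if_pos (by omega)]
          congr 1
          omega
  rw [h1, ← ENNReal.tsum_mul_left, B]
  refine tsum_congr fun i => ?_
  rw [← mul_assoc, mul_comm (ENNReal.ofReal ((1 - p) * p ^ k)), mul_assoc,
    ← F_key hp0 hp1 k hk (by omega : 1 ≤ m + i)]
  congr 2
  omega

lemma B_zero {p : ℝ} (k m : ℕ) : B k p 0 m = Tl k p m := by
  rw [B, Tl]
  refine tsum_congr fun j => ?_
  simp

lemma B_iter {p : ℝ} (hp0 : 0 < p) (hp1 : p < 1) (k : ℕ) (hk : 1 ≤ k)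
    (s : ℕ) {m : ℕ} (hm : 1 ≤ m) :
    ENNReal.ofReal ((1 - p) * p ^ k) ^ s * B k p s m = B k p 0 (m + s * k) := by
  induction s generalizing m with
  | zero => simp
  | succ s ih =>
    have h1 : ENNReal.ofReal ((1 - p) * p ^ k) ^ (s + 1) * B k p (s + 1) m
        = ENNReal.ofReal ((1 - p) * p ^ k) ^ s
          * (ENNReal.ofReal ((1 - p) * p ^ k) * B k p (s + 1) m) := by
      rw [pow_succ, mul_assoc]
    rw [h1, B_step hp0 hp1 k hk s hm, ih (by omega : 1 ≤ m + k)]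
    congr 1
    ring

end RunAux

open RunAux ENNReal in
/-- The `r`-th factorial moment:
`E[N_k(N_k-1)⋯(N_k-r+1)] = r! f_k((r+1)k+r)/(q p^k)^{r+1}`. -/
theorem factorial_moment_eq (k : ℕ) (hk : 1 ≤ k) (p q : ℝ) (hp0 : 0 < p) (hp1 : p < 1)
    (hq : q = 1 - p) (r : ℕ) (hr : 1 ≤ r) :
    ∑' n : ℕ, (n.descFactorial r : ℝ) * fk k p n
      = (r.factorial : ℝ) * fk k p ((r + 1) * k + r) / (q * p ^ k) ^ (r + 1) := by
  subst hq
  have hqp : 0 < (1 - p) * p ^ k := mul_pos (by linarith) (pow_pos hp0 k)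
  have hc0 : ENNReal.ofReal ((1 - p) * p ^ k) ≠ 0 := by
    simp [ENNReal.ofReal_eq_zero]
    linarith
  -- the ENNReal-level shifted sum
  have hBrr : (∑' n : ℕ, ((n.choose r : ℝ≥0∞)) * F k p n) = B k p r r := by
    have h0 : ∀ n < r, ((n.choose r : ℝ≥0∞)) * F k p n = 0 := by
      intro n hn
      rw [Nat.choose_eq_zero_of_lt hn]
      simp
    rw [enn_tsum_shift _ r h0, B]
    refine tsum_congr fun d => ?_
    rw [Nat.add_comm r d]
  have hmain : ENNReal.ofReal ((1 - p) * p ^ k) ^ r * B k p r r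
      = Tl k p (r * (k + 1)) := by
    rw [B_iter hp0 hp1 k hk r hr, B_zero]
    congr 1
    ring
  have hTl : Tl k p (r * (k + 1)) = ENNReal.ofReal (∑' j, fk k p (r * (k + 1) + j)) :=
    Tl_eq hp0.le hp1.le k _
  have hBne : B k p r r ≠ ⊤ := by
    intro hB
    have htop : (⊤ : ℝ≥0∞) = ENNReal.ofReal (∑' j, fk k p (r * (k + 1) + j)) := by
      rw [← hTl, ← hmain, hB, ENNReal.mul_top (pow_ne_zero _ hc0)]
    exact ENNReal.ofReal_ne_top htop.symm
  have hgnn : ∀ n : ℕ, 0 ≤ (n.choose r : ℝ) * fk k p n :=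
    fun n => mul_nonneg (Nat.cast_nonneg _) (fk_nonneg hp0.le hp1.le k n)
  have hofReal : ∀ n : ℕ, ENNReal.ofReal ((n.choose r : ℝ) * fk k p n)
      = (n.choose r : ℝ≥0∞) * F k p n := by
    intro n
    rw [ENNReal.ofReal_mul (Nat.cast_nonneg _), ENNReal.ofReal_natCast, F]
  have hsumg : Summable (fun n : ℕ => (n.choose r : ℝ) * fk k p n) := by
    have hfin : (∑' n : ℕ, ((n.choose r : ℝ≥0∞)) * F k p n) ≠ ⊤ := by
      rw [hBrr]; exact hBne
    have := ENNReal.summable_toReal hfin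
    refine this.congr fun n => ?_
    rw [← hofReal n, ENNReal.toReal_ofReal (hgnn n)]
  have hofS : ENNReal.ofReal (∑' n : ℕ, (n.choose r : ℝ) * fk k p n) = B k p r r := by
    rw [ENNReal.ofReal_tsum_of_nonneg hgnn hsumg]
    exact (tsum_congr hofReal).trans hBrr
  have hSnn : 0 ≤ ∑' n : ℕ, (n.choose r : ℝ) * fk k p n := tsum_nonneg hgnn
  have hGnn : 0 ≤ ∑' j, fk k p (r * (k + 1) + j) :=
    tsum_nonneg fun j => fk_nonneg hp0.le hp1.le k _
  have henn : ENNReal.ofReal (((1 - p) * p ^ k) ^ r * ∑' n : ℕ, (n.choose r : ℝ) * fk k p n)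
      = ENNReal.ofReal (∑' j, fk k p (r * (k + 1) + j)) := by
    rw [ENNReal.ofReal_mul (pow_nonneg hqp.le r), ENNReal.ofReal_pow hqp.le, hofS, hmain, hTl]
  have hreal : ((1 - p) * p ^ k) ^ r * (∑' n : ℕ, (n.choose r : ℝ) * fk k p n)
      = ∑' j, fk k p (r * (k + 1) + j) :=
    (ENNReal.ofReal_eq_ofReal_iff (mul_nonneg (pow_nonneg hqp.le r) hSnn) hGnn).1 henn
  have hm1 : 1 ≤ r * (k + 1) := Nat.one_le_iff_ne_zero.2 (by positivity)
  have hfkval : fk k p ((r + 1) * k + r)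
      = ((1 - p) * p ^ k) * ∑' j, fk k p (r * (k + 1) + j) := by
    have h := key_rec hp0 hp1 k hk (m := r * (k + 1)) hm1
    rw [show (r + 1) * k + r = r * (k + 1) + k by ring]
    exact h
  have hdesc : ∀ n : ℕ, ((n.descFactorial r : ℕ) : ℝ)
      = (r.factorial : ℝ) * ((n.choose r : ℝ)) := by
    intro n
    rw [Nat.descFactorial_eq_factorial_mul_choose]
    push_cast
    ring
  calc ∑' n : ℕ, (n.descFactorial r : ℝ) * fk k p n
      = ∑' n : ℕ, (r.factorial : ℝ) * ((n.choose r : ℝ) * fk k p n) := by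
        refine tsum_congr fun n => ?_
        rw [hdesc]
        ring
    _ = (r.factorial : ℝ) * ∑' n : ℕ, (n.choose r : ℝ) * fk k p n := tsum_mul_left
    _ = (r.factorial : ℝ) * fk k p ((r + 1) * k + r) / ((1 - p) * p ^ k) ^ (r + 1) := by
        rw [hfkval, eq_div_iff (pow_ne_zero (r + 1) (ne_of_gt hqp))]
        linear_combination (r.factorial : ℝ) * ((1 - p) * p ^ k) * hreal
end

section
/- The variance of the geometric distribution of order k is Var(N_k) = 1/(q p^k)^2 - (2k+1)/(q p^k) - p/q^2. -/
/-!
Let `Z n = P(N_k > n)` be the probability that the first `n` trials contain no run of `k`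
successes. Then `P(N_k = n + 1) = Z n - Z (n + 1)`, and a first run completed at trial
`n + k + 1` is a run-free prefix of length `n` followed by a failure and `k` successes, so
`P(N_k = n + k + 1) = q p^k Z n`. Summation by parts turns the first identity into
`E N_k = ∑ Z n` and `E N_k² = ∑ (2n + 1) Z n`; the second, applied to the total mass and to the
mean, gives `q p^k ∑ Z n = 1 - p^k` and `∑ Z n = k p^k + q p^k ∑ (n + k + 1) Z n`, which
determine `∑ Z n` and `∑ n Z n`. All series converge geometrically because
`Z (n + k + 1) ≤ (1 - q p^k) Z n`.
-/

open Finset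

attribute [local instance] Classical.propDecidable

noncomputable def bernoulliWeight (p : ℝ) (n : ℕ) (ω : Fin n → Bool) : ℝ :=
  ∏ i, if ω i = true then p else 1 - p

theorem bernoulliWeight_nonneg {p : ℝ} (hp0 : 0 ≤ p) (hp1 : p ≤ 1) (n : ℕ) (ω : Fin n → Bool) :
    0 ≤ bernoulliWeight p n ω :=
  prod_nonneg fun _ _ => by split <;> linarith

section BernoulliWeight

variable (p : ℝ)

theorem bernoulliWeight_eq_pow_mul_pow (n : ℕ) (ω : Fin n → Bool) :
    bernoulliWeight p n ω = p ^ #{i | ω i = true} * (1 - p) ^ #{i | ω i = false} := by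
  simp [bernoulliWeight, prod_ite]

theorem fk_eq_sum_bernoulliWeight (k n : ℕ) :
    fk k p n = ∑ ω with firstRun k n ω, bernoulliWeight p n ω := by
  simp only [fk, bernoulliWeight_eq_pow_mul_pow]

theorem sum_bernoulliWeight (n : ℕ) : ∑ ω, bernoulliWeight p n ω = 1 := by
  simp only [bernoulliWeight]
  rw [← Fintype.prod_sum fun (_ : Fin n) (b : Bool) => if b = true then p else 1 - p]
  simp

theorem bernoulliWeight_append (a b : ℕ) (u : Fin a → Bool) (v : Fin b → Bool) :
    bernoulliWeight p (a + b) (Fin.append u v) = bernoulliWeight p a u * bernoulliWeight p b v := by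
  simp [bernoulliWeight, Fin.prod_univ_add]

end BernoulliWeight

theorem sum_fun_fin_add {α M : Type*} [Fintype α] [DecidableEq α] [AddCommMonoid M] (a b : ℕ)
    (F : (Fin (a + b) → α) → M) :
    ∑ ω, F ω = ∑ u : Fin a → α, ∑ v : Fin b → α, F (Fin.append u v) := by
  rw [← Fintype.sum_prod_type']
  exact (Fintype.sum_equiv (Fin.appendEquiv a b) _ _ fun _ => rfl).symm

theorem Fin.append_apply_of_le {α : Type*} {a b : ℕ} (u : Fin a → α) (v : Fin b → α)
    (j : Fin (a + b)) (h : a ≤ j) : Fin.append u v j = v ⟨j - a, by omega⟩ := by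
  have hj : j = Fin.natAdd a ⟨j - a, by omega⟩ := by ext; simp only [Fin.natAdd_mk]; omega
  conv_lhs => rw [hj]
  exact Fin.append_right u v _

section Runs

variable {k : ℕ}

def noRun (k n : ℕ) (ω : Fin n → Bool) : Prop :=
  ∀ m, ¬ hasRunEnd k n ω m

def failureThenRun (k : ℕ) : Fin (k + 1) → Bool :=
  fun i => decide (0 < (i : ℕ))

theorem hasRunEnd_append_iff {a b m : ℕ} (u : Fin a → Bool) (v : Fin b → Bool) (hm : m ≤ a) :
    hasRunEnd k (a + b) (Fin.append u v) m ↔ hasRunEnd k a u m := by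
  refine ⟨fun ⟨hkm, _, hrun⟩ => ⟨hkm, hm, fun j hj₁ hj₂ => ?_⟩,
    fun ⟨hkm, _, hrun⟩ => ⟨hkm, by omega, fun j hj₁ hj₂ => ?_⟩⟩
  · simpa using hrun (Fin.castAdd b j) hj₁ hj₂
  · rw [show j = Fin.castAdd b ⟨j, by omega⟩ from rfl, Fin.append_left]
    exact hrun _ hj₁ hj₂

theorem noRun_append_one_iff {n : ℕ} (u : Fin n → Bool) (v : Fin 1 → Bool) :
    noRun k (n + 1) (Fin.append u v) ↔
      noRun k n u ∧ ¬ hasRunEnd k (n + 1) (Fin.append u v) (n + 1) := by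
  refine ⟨fun h => ⟨fun m hm => h m ((hasRunEnd_append_iff u v hm.2.1).2 hm), h (n + 1)⟩,
    fun ⟨hu, hlast⟩ m hm => ?_⟩
  rcases Nat.lt_or_ge m (n + 1) with hlt | hge
  · exact hu m ((hasRunEnd_append_iff u v (Nat.lt_succ_iff.mp hlt)).1 hm)
  · exact hlast (le_antisymm hm.2.1 hge ▸ hm)

theorem firstRun_append_one_iff {n : ℕ} (u : Fin n → Bool) (v : Fin 1 → Bool) :
    firstRun k (n + 1) (Fin.append u v) ↔
      noRun k n u ∧ hasRunEnd k (n + 1) (Fin.append u v) (n + 1) := by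
  rw [firstRun, and_comm]
  refine and_congr_left fun _ => ⟨fun h m hm => ?_, fun h m hm hrun => ?_⟩
  · exact h m (Nat.lt_succ_of_le hm.2.1) ((hasRunEnd_append_iff u v hm.2.1).2 hm)
  · exact h m ((hasRunEnd_append_iff u v (Nat.lt_succ_iff.mp hm)).1 hrun)

theorem firstRun_append_iff (hk : 1 ≤ k) {n : ℕ} (u : Fin n → Bool) (v : Fin (k + 1) → Bool) :
    firstRun k (n + (k + 1)) (Fin.append u v) ↔ noRun k n u ∧ v = failureThenRun k := by
  constructor
  · rintro ⟨⟨-, -, hrun⟩, hfirst⟩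
    have hv : ∀ j : Fin (k + 1), 0 < (j : ℕ) → v j = true := fun j hj => by
      simpa using hrun (Fin.natAdd n j) (by rw [Fin.val_natAdd]; omega)
        (by rw [Fin.val_natAdd]; omega)
    -- if the trial before the final run were a success, a run would already end at `n + k`
    have hv0 : v 0 = false := by
      refine Bool.eq_false_iff.mpr fun hv0 => hfirst (n + k) (by omega) ⟨by omega, by omega, ?_⟩
      intro j hj₁ hj₂
      rw [Fin.append_apply_of_le u v j (by omega)]
      rcases Nat.eq_or_lt_of_le hj₁ with hj | hj
      · convert hv0 using 2; exact Fin.ext (by simp only [Fin.val_zero]; omega)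
      · exact hv _ (by simp only [tsub_pos_iff_lt]; omega)
    refine ⟨fun m hm => hfirst m (by have := hm.2.1; omega)
      ((hasRunEnd_append_iff u v hm.2.1).2 hm), funext fun j => ?_⟩
    rcases Nat.eq_zero_or_pos (j : ℕ) with hj | hj
    · rw [show j = 0 by ext; exact hj, hv0]; rfl
    · simp [hv j hj, failureThenRun, hj]
  · rintro ⟨hu, rfl⟩
    refine ⟨⟨by omega, le_rfl, fun j hj₁ _ => ?_⟩, fun m hm hrun => ?_⟩
    · rw [Fin.append_apply_of_le u _ j (by omega)]
      simp only [failureThenRun, decide_eq_true_eq]; omega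
    rcases Nat.lt_or_ge m (n + 1) with hle | hgt
    · exact hu m ((hasRunEnd_append_iff u _ (Nat.lt_succ_iff.mp hle)).1 hrun)
    · have := hrun.2.2 ⟨n, by omega⟩ (by simp only [tsub_le_iff_right]; omega) hgt
      rw [Fin.append_apply_of_le u _ _ le_rfl] at this
      simp [failureThenRun] at this

end Runs

/-- `survival k p n = P(N_k > n)`. -/
noncomputable def survival (k : ℕ) (p : ℝ) (n : ℕ) : ℝ :=
  ∑ ω with noRun k n ω, bernoulliWeight p n ω

section Survival

variable {k : ℕ} {p : ℝ}

theorem survival_eq_survival_succ_add_fk (k : ℕ) (p : ℝ) (n : ℕ) :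
    survival k p n = survival k p (n + 1) + fk k p (n + 1) := by
  have hsplit : ∀ (u : Fin n → Bool) (v : Fin 1 → Bool),
      (if noRun k n u then bernoulliWeight p n u else 0) * bernoulliWeight p 1 v =
        (if noRun k (n + 1) (Fin.append u v) then bernoulliWeight p (n + 1) (Fin.append u v) else 0)
        + (if firstRun k (n + 1) (Fin.append u v) then
            bernoulliWeight p (n + 1) (Fin.append u v) else 0) := by
    intro u v
    rw [noRun_append_one_iff, firstRun_append_one_iff]
    by_cases hu : noRun k n u <;>
      by_cases hr : hasRunEnd k (n + 1) (Fin.append u v) (n + 1) <;>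
      simp [hu, hr, bernoulliWeight_append]
  simp only [survival, fk_eq_sum_bernoulliWeight, sum_filter, sum_fun_fin_add n 1,
    ← sum_add_distrib, ← hsplit, ← mul_sum, sum_bernoulliWeight, mul_one]

theorem fk_add_succ_eq (hk : 1 ≤ k) (p : ℝ) (n : ℕ) :
    fk k p (n + (k + 1)) = (1 - p) * p ^ k * survival k p n := by
  have hsplit : ∀ (u : Fin n → Bool) (v : Fin (k + 1) → Bool),
      (if firstRun k (n + (k + 1)) (Fin.append u v) then
          bernoulliWeight p (n + (k + 1)) (Fin.append u v) else 0) =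
        (if v = failureThenRun k then bernoulliWeight p (k + 1) v else 0) *
          (if noRun k n u then bernoulliWeight p n u else 0) := by
    intro u v
    rw [firstRun_append_iff hk]
    by_cases hu : noRun k n u <;> by_cases hv : v = failureThenRun k <;>
      simp [hu, hv, bernoulliWeight_append, mul_comm]
  have hweight : bernoulliWeight p (k + 1) (failureThenRun k) = (1 - p) * p ^ k := by
    simp [bernoulliWeight, Fin.prod_univ_succ, failureThenRun]
  simp only [fk_eq_sum_bernoulliWeight, survival, sum_filter, sum_fun_fin_add n (k + 1), hsplit,
    ← sum_mul, sum_ite_eq', mem_univ, if_true, hweight, mul_sum]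

theorem fk_eq_zero_of_lt {n : ℕ} (h : n < k) (p : ℝ) : fk k p n = 0 :=
  sum_eq_zero fun _ hω => absurd (mem_filter.mp hω).2.1.1 (by omega)

theorem fk_self (k : ℕ) (p : ℝ) : fk k p k = p ^ k := by
  have hrun : ∀ ω : Fin k → Bool, firstRun k k ω ↔ ω = fun _ => true := fun ω =>
    ⟨fun h => funext fun j => h.1.2.2 j (by omega) j.isLt,
      fun h => ⟨⟨le_rfl, le_rfl, fun j _ _ => by rw [h]⟩, fun m hm hrun => by
        have := hrun.1; omega⟩⟩
  simp [fk_eq_sum_bernoulliWeight, hrun, bernoulliWeight, filter_eq']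

theorem survival_zero (hk : 1 ≤ k) (p : ℝ) : survival k p 0 = 1 := by
  rw [survival, filter_true_of_mem fun ω _ m hm => by have := hm.1; have := hm.2.1; omega,
    sum_bernoulliWeight]

theorem fk_nonneg (hp0 : 0 ≤ p) (hp1 : p ≤ 1) (k n : ℕ) : 0 ≤ fk k p n := by
  rw [fk_eq_sum_bernoulliWeight]
  exact sum_nonneg fun ω _ => bernoulliWeight_nonneg hp0 hp1 n ω

theorem survival_nonneg (hp0 : 0 ≤ p) (hp1 : p ≤ 1) (k n : ℕ) : 0 ≤ survival k p n :=
  sum_nonneg fun ω _ => bernoulliWeight_nonneg hp0 hp1 n ω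

theorem survival_antitone (hp0 : 0 ≤ p) (hp1 : p ≤ 1) (k : ℕ) : Antitone (survival k p) :=
  antitone_nat_of_succ_le fun n => by
    linarith [survival_eq_survival_succ_add_fk k p n, fk_nonneg hp0 hp1 k (n + 1)]

theorem survival_add_succ_le (hk : 1 ≤ k) (hp0 : 0 ≤ p) (hp1 : p ≤ 1) (n : ℕ) :
    survival k p (n + (k + 1)) ≤ (1 - (1 - p) * p ^ k) * survival k p n := by
  have hstep := survival_eq_survival_succ_add_fk k p (n + k)
  have hrenewal := fk_add_succ_eq hk p n
  rw [← add_assoc] at hrenewal ⊢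
  linarith [survival_antitone hp0 hp1 k (Nat.le_add_right n k)]

end Survival

theorem exists_le_geometric_of_le_mul {g : ℕ → ℝ} (hg : Antitone g) (hg0 : 0 ≤ g 0) {m : ℕ}
    (hm : m ≠ 0) {r : ℝ} (hr0 : 0 < r) (hr1 : r < 1) (h : ∀ n, g (n + m) ≤ r * g n) :
    ∃ C ρ : ℝ, 0 ≤ C ∧ 0 < ρ ∧ ρ < 1 ∧ ∀ n, g n ≤ C * ρ ^ n := by
  set ρ := r ^ ((m : ℝ)⁻¹)
  have hρ0 : 0 < ρ := Real.rpow_pos_of_pos hr0 _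
  have hρ1 : ρ < 1 := Real.rpow_lt_one hr0.le hr1 (by positivity)
  have hρm : ρ ^ m = r := Real.rpow_inv_natCast_pow hr0.le hm
  have hmul : ∀ i, g (m * i) ≤ r ^ i * g 0 := fun i => by
    induction i with
    | zero => simp
    | succ i ih =>
      calc g (m * (i + 1)) = g (m * i + m) := rfl
        _ ≤ r * g (m * i) := h _
        _ ≤ r ^ (i + 1) * g 0 := by rw [pow_succ']; nlinarith
  refine ⟨g 0 / r, ρ, by positivity, hρ0, hρ1, fun n => ?_⟩
  have hpow : ρ ^ (m * (n / m)) * r ≤ ρ ^ n := by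
    have hdiv : n < n / m * m + m := Nat.lt_div_mul_add (Nat.pos_of_ne_zero hm)
    rw [← hρm, ← pow_add]
    exact pow_le_pow_of_le_one hρ0.le hρ1.le (by rw [Nat.mul_comm]; omega)
  calc g n ≤ g (m * (n / m)) := hg (Nat.mul_div_le n m)
    _ ≤ ρ ^ (m * (n / m)) * g 0 := by rw [pow_mul, hρm]; exact hmul _
    _ ≤ g 0 / r * ρ ^ n := by
      rw [div_mul_eq_mul_div, le_div_iff₀ hr0]; nlinarith

theorem summable_pow_mul_of_le_geometric {g : ℕ → ℝ} (hg : ∀ n, 0 ≤ g n) {C ρ : ℝ} (hρ0 : 0 ≤ ρ)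
    (hρ1 : ρ < 1) (h : ∀ n, g n ≤ C * ρ ^ n) (j : ℕ) : Summable fun n : ℕ => (n : ℝ) ^ j * g n := by
  refine .of_nonneg_of_le (fun n => by have := hg n; positivity) (fun n => ?_)
    ((summable_pow_mul_geometric_of_norm_lt_one j (by rwa [Real.norm_of_nonneg hρ0])).mul_left C)
  calc (n : ℝ) ^ j * g n ≤ (n : ℝ) ^ j * (C * ρ ^ n) := by gcongr; exact h n
    _ = C * ((n : ℝ) ^ j * ρ ^ n) := by ring

theorem tsum_mul_succ_eq_of_eq_add {Z f φ : ℕ → ℝ} (h : ∀ n, Z n = Z (n + 1) + f (n + 1))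
    (hZ : Summable fun n => φ n * Z n) (hΔZ : Summable fun n => (φ (n + 1) - φ n) * Z n) :
    ∑' n, φ (n + 1) * f (n + 1) = φ 0 * Z 0 + ∑' n, (φ (n + 1) - φ n) * Z n := by
  have hterm : ∀ n, φ (n + 1) * f (n + 1) =
      ((φ (n + 1) - φ n) * Z n + φ n * Z n) - φ (n + 1) * Z (n + 1) := fun n => by
    rw [h n]; ring
  have hZ' : Summable fun n => φ (n + 1) * Z (n + 1) :=
    (summable_nat_add_iff 1).mpr hZ
  rw [tsum_congr hterm, (hΔZ.add hZ).tsum_sub hZ', hΔZ.tsum_add hZ, hZ.tsum_eq_zero_add]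
  ring

section Moments

variable {k : ℕ} {p : ℝ}

theorem exists_survival_le_geometric (hk : 1 ≤ k) (hp0 : 0 < p) (hp1 : p < 1) :
    ∃ C ρ : ℝ, 0 ≤ C ∧ 0 < ρ ∧ ρ < 1 ∧ ∀ n, survival k p n ≤ C * ρ ^ n := by
  have hpk : 0 < p ^ k := pow_pos hp0 k
  have hpk1 : p ^ k ≤ 1 := pow_le_one₀ hp0.le hp1.le
  exact exists_le_geometric_of_le_mul (survival_antitone hp0.le hp1.le k)
    (survival_nonneg hp0.le hp1.le k 0) k.succ_ne_zero (by nlinarith) (by nlinarith)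
    (survival_add_succ_le hk hp0.le hp1.le)

theorem summable_pow_mul_survival (hk : 1 ≤ k) (hp0 : 0 < p) (hp1 : p < 1) (j : ℕ) :
    Summable fun n : ℕ => (n : ℝ) ^ j * survival k p n := by
  obtain ⟨C, ρ, -, hρ0, hρ1, hZ⟩ := exists_survival_le_geometric hk hp0 hp1
  exact summable_pow_mul_of_le_geometric (survival_nonneg hp0.le hp1.le k) hρ0.le hρ1 hZ j

theorem summable_pow_mul_fk (hk : 1 ≤ k) (hp0 : 0 < p) (hp1 : p < 1) (j : ℕ) :
    Summable fun n : ℕ => (n : ℝ) ^ j * fk k p n := by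
  obtain ⟨C, ρ, hC, hρ0, hρ1, hZ⟩ := exists_survival_le_geometric hk hp0 hp1
  have hf : ∀ n, fk k p n ≤ C / ρ * ρ ^ n
    | 0 => by rw [fk_eq_zero_of_lt hk p]; positivity
    | n + 1 => calc
        fk k p (n + 1) ≤ survival k p n := by
          linarith [survival_eq_survival_succ_add_fk k p n, survival_nonneg hp0.le hp1.le k (n + 1)]
        _ ≤ C * ρ ^ n := hZ n
        _ = C / ρ * ρ ^ (n + 1) := by field_simp; ring
  exact summable_pow_mul_of_le_geometric (fk_nonneg hp0.le hp1.le k) hρ0.le hρ1 hf j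

theorem tsum_fk (hk : 1 ≤ k) (hp0 : 0 < p) (hp1 : p < 1) : ∑' n, fk k p n = 1 := by
  have hZ : Summable (survival k p) := by simpa using summable_pow_mul_survival hk hp0 hp1 0
  have hf : Summable (fk k p) := by simpa using summable_pow_mul_fk hk hp0 hp1 0
  have := tsum_mul_succ_eq_of_eq_add (φ := fun _ => 1) (survival_eq_survival_succ_add_fk k p)
    (by simpa using hZ) (by simp)
  simp only [one_mul, sub_self, zero_mul, tsum_zero, add_zero, survival_zero hk] at this
  rw [hf.tsum_eq_zero_add, this, fk_eq_zero_of_lt hk, zero_add]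

theorem tsum_mul_fk_eq_tsum_survival (hk : 1 ≤ k) (hp0 : 0 < p) (hp1 : p < 1) :
    ∑' n : ℕ, (n : ℝ) * fk k p n = ∑' n, survival k p n := by
  have hf : Summable fun n : ℕ => (n : ℝ) * fk k p n := by
    simpa using summable_pow_mul_fk hk hp0 hp1 1
  have := tsum_mul_succ_eq_of_eq_add (φ := fun n : ℕ => (n : ℝ))
    (survival_eq_survival_succ_add_fk k p) (by simpa using summable_pow_mul_survival hk hp0 hp1 1)
    (by simpa using summable_pow_mul_survival hk hp0 hp1 0)
  push_cast at this
  simpa [hf.tsum_eq_zero_add] using this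

theorem tsum_sq_mul_fk_eq (hk : 1 ≤ k) (hp0 : 0 < p) (hp1 : p < 1) :
    ∑' n : ℕ, (n : ℝ) ^ 2 * fk k p n =
      2 * ∑' n : ℕ, (n : ℝ) * survival k p n + ∑' n, survival k p n := by
  have hZ₀ : Summable (survival k p) := by simpa using summable_pow_mul_survival hk hp0 hp1 0
  have hZ₁ : Summable fun n : ℕ => (n : ℝ) * survival k p n := by
    simpa using summable_pow_mul_survival hk hp0 hp1 1
  have hΔ : ∀ n : ℕ, (((n + 1 : ℕ) : ℝ) ^ 2 - (n : ℝ) ^ 2) * survival k p n =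
      2 * ((n : ℝ) * survival k p n) + survival k p n := fun n => by push_cast; ring
  have := tsum_mul_succ_eq_of_eq_add (φ := fun n : ℕ => (n : ℝ) ^ 2)
    (survival_eq_survival_succ_add_fk k p) (summable_pow_mul_survival hk hp0 hp1 2)
    (by simpa only [hΔ] using (hZ₁.mul_left 2).add hZ₀)
  rw [(summable_pow_mul_fk hk hp0 hp1 2).tsum_eq_zero_add, this]
  simp only [hΔ, (hZ₁.mul_left 2).tsum_add hZ₀, tsum_mul_left]
  simp

theorem tsum_mul_fk_eq (hk : 1 ≤ k) (p : ℝ) (φ : ℕ → ℝ) (hφ : Summable fun n => φ n * fk k p n) :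
    ∑' n, φ n * fk k p n =
      φ k * p ^ k + (1 - p) * p ^ k * ∑' n, φ (n + (k + 1)) * survival k p n := by
  rw [← hφ.sum_add_tsum_nat_add (k + 1), sum_range_succ,
    sum_eq_zero fun i hi => by rw [fk_eq_zero_of_lt (mem_range.mp hi), mul_zero], fk_self,
    zero_add, ← tsum_mul_left]
  exact congrArg _ (tsum_congr fun n => by rw [fk_add_succ_eq hk]; ring)

theorem mul_tsum_survival (hk : 1 ≤ k) (hp0 : 0 < p) (hp1 : p < 1) :
    (1 - p) * p ^ k * ∑' n, survival k p n = 1 - p ^ k := by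
  have := tsum_mul_fk_eq hk p (fun _ => 1) (by simpa using summable_pow_mul_fk hk hp0 hp1 0)
  simp only [one_mul, tsum_fk hk hp0 hp1] at this
  linarith

theorem tsum_survival_eq (hk : 1 ≤ k) (hp0 : 0 < p) (hp1 : p < 1) :
    ∑' n, survival k p n = k * p ^ k +
      (1 - p) * p ^ k * (∑' n : ℕ, (n : ℝ) * survival k p n + (k + 1) * ∑' n, survival k p n) := by
  have hZ₀ : Summable (survival k p) := by simpa using summable_pow_mul_survival hk hp0 hp1 0
  have hZ₁ : Summable fun n : ℕ => (n : ℝ) * survival k p n := by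
    simpa using summable_pow_mul_survival hk hp0 hp1 1
  calc ∑' n, survival k p n = ∑' n : ℕ, (n : ℝ) * fk k p n :=
        (tsum_mul_fk_eq_tsum_survival hk hp0 hp1).symm
    _ = k * p ^ k + (1 - p) * p ^ k * ∑' n : ℕ, ((n + (k + 1) : ℕ) : ℝ) * survival k p n :=
        tsum_mul_fk_eq hk p (fun n => n) (by simpa using summable_pow_mul_fk hk hp0 hp1 1)
    _ = _ := by
        rw [← tsum_mul_left (a := (k + 1 : ℝ)), ← hZ₁.tsum_add (hZ₀.mul_left _)]
        exact congrArg _ (congrArg _ (tsum_congr fun n => by push_cast; ring))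

end Moments

/-- The variance of the geometric distribution of order `k` is
`1/(q p^k)^2 - (2k+1)/(q p^k) - p/q^2`. -/
theorem variance_geometric_order_k (k : ℕ) (hk : 1 ≤ k) (p q : ℝ) (hp0 : 0 < p) (hp1 : p < 1)
    (hq : q = 1 - p) :
    (∑' n : ℕ, (n : ℝ) ^ 2 * fk k p n) - (∑' n : ℕ, (n : ℝ) * fk k p n) ^ 2
      = 1 / (q * p ^ k) ^ 2 - (2 * k + 1) / (q * p ^ k) - p / q ^ 2 := by
  rw [tsum_sq_mul_fk_eq hk hp0 hp1, tsum_mul_fk_eq_tsum_survival hk hp0 hp1]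
  have hmass := mul_tsum_survival hk hp0 hp1
  have hmean := tsum_survival_eq hk hp0 hp1
  generalize ∑' n, survival k p n = T₀ at hmass hmean ⊢
  generalize ∑' n : ℕ, (n : ℝ) * survival k p n = T₁ at hmean ⊢
  subst hq
  have hq0 : 1 - p ≠ 0 := by linarith
  have hc : (1 - p) * p ^ k ≠ 0 := mul_ne_zero hq0 (pow_ne_zero k hp0.ne')
  have hT₀ : T₀ = (1 - p ^ k) / ((1 - p) * p ^ k) := by field_simp; linarith
  have hT₁ : T₁ = (T₀ - k * p ^ k - (1 - p) * p ^ k * (k + 1) * T₀) / ((1 - p) * p ^ k) := by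
    field_simp; linarith
  rw [hT₁, hT₀]
  field_simp
  ring
end

section
/- Muselli's formula: for n ≥ k+1, the pmf of the geometric distribution of order k satisfies f_k(n) = Σ_{m=1}^{⌊(n+1)/(k+1)⌋} (-1)^{m-1} p^{mk} q^{m-1} [ C(n - mk - 1, m-2) + q C(n - mk - 1, m-1) ]. -/
open Finset

attribute [local instance] Classical.propDecidable

namespace MuselliAux

noncomputable def wgt (p : ℝ) {n : ℕ} (ω : Fin n → Bool) : ℝ :=
  ∏ i, (if ω i = true then p else 1 - p)

def noRun (k n : ℕ) (σ : Fin n → Bool) : Prop := ∀ j, ¬ hasRunEnd k n σ j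

noncomputable def gg (k : ℕ) (p : ℝ) (m : ℕ) : ℝ :=
  ∑ σ : Fin m → Bool, if noRun k m σ then wgt p σ else 0

lemma sum_wgt (p : ℝ) (n : ℕ) : ∑ ω : Fin n → Bool, wgt p ω = 1 := by
  classical
  unfold wgt
  rw [← Fintype.piFinset_univ, ← Finset.prod_univ_sum (fun _ : Fin n => (univ : Finset Bool))
    (fun _ b => if b = true then p else 1 - p)]
  have : ∀ i : Fin n, (∑ b : Bool, if b = true then p else 1 - p) = 1 := by
    intro i; simp
  simp [this]

lemma weight_eq (p : ℝ) {n : ℕ} (ω : Fin n → Bool) :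
    p ^ (Finset.univ.filter (fun i => ω i = true)).card *
      (1 - p) ^ (Finset.univ.filter (fun i => ω i = false)).card = wgt p ω := by
  classical
  unfold wgt
  rw [Finset.prod_ite (fun _ => p) (fun _ => 1 - p), Finset.prod_const, Finset.prod_const]
  congr 2
  apply congrArg Finset.card
  ext x
  simp

lemma fk_eq (k : ℕ) (p : ℝ) (n : ℕ) :
    fk k p n = ∑ ω : Fin n → Bool, if firstRun k n ω then wgt p ω else 0 := by
  unfold fk
  rw [Finset.sum_filter]
  apply Finset.sum_congr rfl
  intro ω _
  by_cases h : firstRun k n ω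
  · simp only [h, if_true, weight_eq]
  · simp [h]


lemma hasRunEnd_prefix (k a s : ℕ) (σ : Fin (a + s) → Bool) (j : ℕ) (hj : j ≤ a) :
    hasRunEnd k (a + s) σ j ↔ hasRunEnd k a (fun i => σ (Fin.castAdd s i)) j := by
  unfold hasRunEnd
  constructor
  · rintro ⟨h1, _, h3⟩
    refine ⟨h1, hj, fun i hi1 hi2 => ?_⟩
    exact h3 (Fin.castAdd s i) hi1 hi2
  · rintro ⟨h1, _, h3⟩
    refine ⟨h1, by omega, fun i hi1 hi2 => ?_⟩
    have hia : (i : ℕ) < a := lt_of_lt_of_le hi2 hj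
    have : Fin.castAdd s (⟨(i : ℕ), hia⟩ : Fin a) = i := by
      apply Fin.ext; rfl
    have := h3 ⟨(i : ℕ), hia⟩ hi1 hi2
    simpa [Fin.castAdd] using this

lemma split_sum (p : ℝ) (a s : ℕ) (P : (Fin a → Bool) → Prop) (pat : ℕ → Bool) :
    (∑ ω : Fin (a + s) → Bool,
      if (P (fun i => ω (Fin.castAdd s i)) ∧ ∀ i : Fin (a + s), a ≤ (i : ℕ) → ω i = pat (i : ℕ))
        then wgt p ω else 0)
    = (∑ σ : Fin a → Bool, if P σ then wgt p σ else 0) *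
        ∏ i ∈ Finset.range s, (if pat (a + i) = true then p else 1 - p) := by
  classical
  have hbij : Function.Bijective
      (fun uv : (Fin a → Bool) × (Fin s → Bool) => Fin.append uv.1 uv.2) := by
    constructor
    · rintro ⟨u, v⟩ ⟨u', v'⟩ h
      simp only [Prod.mk.injEq]
      constructor
      · funext i
        have := congrFun h (Fin.castAdd s i)
        simpa [Fin.append_left] using this
      · funext i
        have := congrFun h (Fin.natAdd a i)
        simpa [Fin.append_right] using this
    · intro ω
      refine ⟨(fun i => ω (Fin.castAdd s i), fun i => ω (Fin.natAdd a i)), ?_⟩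
      funext i
      refine Fin.addCases (fun i' => ?_) (fun i' => ?_) i
      · simp [Fin.append_left]
      · simp [Fin.append_right]
  rw [← Fintype.sum_bijective _ hbij _
    (fun ω => if (P (fun i => ω (Fin.castAdd s i)) ∧
      ∀ i : Fin (a + s), a ≤ (i : ℕ) → ω i = pat (i : ℕ)) then wgt p ω else 0) (fun uv => rfl)]
  rw [Fintype.sum_prod_type]
  have key : ∀ u : Fin a → Bool, ∀ v : Fin s → Bool,
      (if (P (fun i => Fin.append u v (Fin.castAdd s i)) ∧
          ∀ i : Fin (a + s), a ≤ (i : ℕ) → Fin.append u v i = pat (i : ℕ))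
        then wgt p (Fin.append u v) else 0)
      = if v = (fun i : Fin s => pat (a + (i : ℕ))) then (if P u then wgt p (Fin.append u v) else 0) else 0 := by
    intro u v
    have h1 : (fun i => Fin.append u v (Fin.castAdd s i)) = u := by
      funext i; simp [Fin.append_left]
    have h2 : (∀ i : Fin (a + s), a ≤ (i : ℕ) → Fin.append u v i = pat (i : ℕ)) ↔
        v = (fun i : Fin s => pat (a + (i : ℕ))) := by
      constructor
      · intro h
        funext i
        have := h (Fin.natAdd a i) (by simp)
        simpa [Fin.append_right] using this
      · intro h i
        refine Fin.addCases (motive := fun i => a ≤ (i : ℕ) → Fin.append u v i = pat (i : ℕ))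
          (fun i' => ?_) (fun i' => ?_) i
        · intro hi'
          exact absurd hi' (by simpa using Nat.not_le.mpr i'.isLt)
        · intro _
          simp [Fin.append_right, h]
    simp only [h1, h2]
    by_cases hv : v = (fun i : Fin s => pat (a + (i : ℕ))) <;> by_cases hP : P u <;> simp [hv, hP]
  simp only [key]
  have inner : ∀ u : Fin a → Bool,
      (∑ v : Fin s → Bool, if v = (fun i : Fin s => pat (a + (i : ℕ)))
        then (if P u then wgt p (Fin.append u v) else 0) else 0)
      = if P u then wgt p u * ∏ i ∈ Finset.range s, (if pat (a + i) = true then p else 1 - p) else 0 := by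
    intro u
    rw [Finset.sum_ite_eq' Finset.univ (fun i : Fin s => pat (a + (i : ℕ)))
      (fun v => if P u then wgt p (Fin.append u v) else 0)]
    simp only [Finset.mem_univ, if_true]
    have hw : wgt p (Fin.append u (fun i : Fin s => pat (a + (i : ℕ))))
        = wgt p u * ∏ i ∈ Finset.range s, (if pat (a + i) = true then p else 1 - p) := by
      unfold wgt
      rw [Fin.prod_univ_add (fun i => if Fin.append u (fun i : Fin s => pat (a + (i : ℕ))) i = true then p else 1 - p)]
      congr 1
      · apply Finset.prod_congr rfl
        intro i _
        simp [Fin.append_left]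
      · rw [← Fin.prod_univ_eq_prod_range (fun i => if pat (a + i) = true then p else 1 - p) s]
        apply Finset.prod_congr rfl
        intro i _
        simp [Fin.append_right]
    rw [hw]
  simp only [inner]
  rw [Finset.sum_mul]
  apply Finset.sum_congr rfl
  intro u _
  by_cases hP : P u <;> simp [hP]

lemma gg_small (k : ℕ) (p : ℝ) (m : ℕ) (h : m < k) : gg k p m = 1 := by
  unfold gg
  have h2 : ∀ σ : Fin m → Bool, noRun k m σ := by
    intro σ j hj
    rcases hj with ⟨h1, h2, _⟩
    omega
  simp only [h2, if_true]
  exact sum_wgt p m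

lemma gg_k (k : ℕ) (p : ℝ) (hk : 1 ≤ k) : gg k p k = 1 - p ^ k := by
  unfold gg
  have hiff : ∀ σ : Fin k → Bool, noRun k k σ ↔ ¬ (σ = fun _ => true) := by
    intro σ
    constructor
    · intro h hσ
      apply h k
      refine ⟨le_rfl, le_rfl, fun j _ _ => ?_⟩
      rw [hσ]
    · intro h j hj
      rcases hj with ⟨h1, h2, h3⟩
      have hjk : j = k := le_antisymm h2 h1
      subst hjk
      apply h
      funext i
      exact h3 i (by omega) i.isLt
  have hsplit : ∀ σ : Fin k → Bool, (if noRun k k σ then wgt p σ else 0)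
      = wgt p σ - (if σ = (fun _ => true) then wgt p σ else 0) := by
    intro σ
    rw [if_congr (hiff σ) rfl rfl]
    by_cases h : σ = fun _ => true <;> simp [h]
  rw [Finset.sum_congr rfl (fun σ _ => hsplit σ), Finset.sum_sub_distrib, sum_wgt,
    Finset.sum_ite_eq' Finset.univ (fun _ => true) (fun σ => wgt p σ)]
  simp [wgt]

lemma firstRun_iff (k a : ℕ) (hk : 1 ≤ k) (ω : Fin (a + (k + 1)) → Bool) :
    firstRun k (a + (k + 1)) ω ↔
      (noRun k a (fun i => ω (Fin.castAdd (k + 1) i)) ∧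
        ∀ i : Fin (a + (k + 1)), a ≤ (i : ℕ) → ω i = decide (a < (i : ℕ))) := by
  constructor
  · rintro ⟨hrun, hfirst⟩
    have hsuffix : ∀ i : Fin (a + (k + 1)), a < (i : ℕ) → ω i = true := by
      intro i hi
      exact hrun.2.2 i (by omega) i.isLt
    have hωa : ω ⟨a, by omega⟩ = false := by
      by_contra h
      have hT : ω ⟨a, by omega⟩ = true := by
        revert h; cases (ω ⟨a, by omega⟩) <;> simp
      apply hfirst (a + k) (by omega)
      refine ⟨by omega, by omega, fun j hj1 hj2 => ?_⟩
      rcases Nat.eq_or_lt_of_le (by omega : a ≤ (j : ℕ)) with he | hl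
      · have : j = ⟨a, by omega⟩ := Fin.ext he.symm
        rw [this, hT]
      · exact hsuffix j hl
    constructor
    · intro j hj
      have hja : j ≤ a := hj.2.1
      have := (hasRunEnd_prefix k a (k + 1) ω j hja).mpr hj
      exact hfirst j (by omega) this
    · intro i hi
      rcases Nat.eq_or_lt_of_le hi with he | hl
      · have hia : i = ⟨a, by omega⟩ := Fin.ext he.symm
        rw [hia, hωa]
        simp
      · rw [hsuffix i hl]
        simp [hl]
  · rintro ⟨hnr, hpat⟩
    have hsuffix : ∀ i : Fin (a + (k + 1)), a < (i : ℕ) → ω i = true := by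
      intro i hi
      rw [hpat i (le_of_lt hi)]
      simp [hi]
    have hωa : ω ⟨a, by omega⟩ = false := by
      rw [hpat ⟨a, by omega⟩ le_rfl]
      simp
    constructor
    · exact ⟨by omega, le_rfl, fun j hj1 _ => hsuffix j (by omega)⟩
    · intro m hm hrun
      rcases le_or_gt m a with hma | hma
      · exact hnr m ((hasRunEnd_prefix k a (k + 1) ω m hma).mp hrun)
      · have hk2 : k ≤ m := hrun.1
        have hwin := hrun.2.2 ⟨a, by omega⟩ (by simp; omega) (by simpa using hma)
        rw [hωa] at hwin
        exact Bool.false_ne_true hwin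

lemma fk_split (k : ℕ) (hk : 1 ≤ k) (p : ℝ) (a : ℕ) :
    fk k p (a + (k + 1)) = ((1 - p) * p ^ k) * gg k p a := by
  rw [fk_eq]
  have hcong : ∀ ω : Fin (a + (k + 1)) → Bool,
      (if firstRun k (a + (k + 1)) ω then wgt p ω else 0) =
      (if (noRun k a (fun i => ω (Fin.castAdd (k + 1) i)) ∧
          ∀ i : Fin (a + (k + 1)), a ≤ (i : ℕ) → ω i = (fun j : ℕ => decide (a < j)) (i : ℕ))
        then wgt p ω else 0) := by
    intro ω
    exact if_congr (firstRun_iff k a hk ω) rfl rfl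
  rw [Finset.sum_congr rfl (fun ω _ => hcong ω),
    split_sum p a (k + 1) (noRun k a) (fun j : ℕ => decide (a < j))]
  rw [Finset.prod_range_succ' (fun i => if decide (a < a + i) = true then p else 1 - p) k]
  have h1 : ∀ i ∈ Finset.range k,
      (if decide (a < a + (i + 1)) = true then p else 1 - p) = p := by
    intro i _
    simp
  rw [Finset.prod_congr rfl h1, Finset.prod_const]
  simp only [Nat.add_zero, decide_eq_true_eq, lt_self_iff_false, if_false, Finset.card_range]
  unfold gg
  ring

lemma noRunTail_iff (k a : ℕ) (hk : 1 ≤ k) (σ : Fin (a + k) → Bool) :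
    (noRun k (a + k) σ ∧ ∀ i : Fin (a + k), a + 1 ≤ (i : ℕ) → σ i = true) ↔
      (noRun k a (fun i => σ (Fin.castAdd k i)) ∧
        ∀ i : Fin (a + k), a ≤ (i : ℕ) → σ i = decide (a < (i : ℕ))) := by
  constructor
  · rintro ⟨hnr, hsuf⟩
    have hσa : σ ⟨a, by omega⟩ = false := by
      by_contra h
      have hT : σ ⟨a, by omega⟩ = true := by
        revert h; cases (σ ⟨a, by omega⟩) <;> simp
      apply hnr (a + k)
      refine ⟨by omega, le_rfl, fun j hj1 hj2 => ?_⟩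
      rcases Nat.eq_or_lt_of_le (by omega : a ≤ (j : ℕ)) with he | hl
      · have : j = ⟨a, by omega⟩ := Fin.ext he.symm
        rw [this, hT]
      · exact hsuf j hl
    constructor
    · intro j hj
      have hja : j ≤ a := hj.2.1
      exact hnr j ((hasRunEnd_prefix k a k σ j hja).mpr hj)
    · intro i hi
      rcases Nat.eq_or_lt_of_le hi with he | hl
      · have hia : i = ⟨a, by omega⟩ := Fin.ext he.symm
        rw [hia, hσa]
        simp
      · rw [hsuf i hl]
        simp [hl]
  · rintro ⟨hnr, hpat⟩
    have hσa : σ ⟨a, by omega⟩ = false := by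
      rw [hpat ⟨a, by omega⟩ le_rfl]
      simp
    constructor
    · intro j hj
      rcases le_or_gt j a with hja | hja
      · exact hnr j ((hasRunEnd_prefix k a k σ j hja).mp hj)
      · have hk2 : k ≤ j := hj.1
        have hjn : j ≤ a + k := hj.2.1
        have hwin := hj.2.2 ⟨a, by omega⟩ (by simp; omega) (by simpa using hja)
        rw [hσa] at hwin
        exact Bool.false_ne_true hwin
    · intro i hi
      have hai : a < (i : ℕ) := by omega
      rw [hpat i (by omega)]
      simp [hai]

lemma T_split (k : ℕ) (hk : 1 ≤ k) (p : ℝ) (a : ℕ) :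
    (∑ σ : Fin (a + k) → Bool,
      if (noRun k (a + k) σ ∧ ∀ i : Fin (a + k), a + 1 ≤ (i : ℕ) → σ i = true)
        then wgt p σ else 0)
    = ((1 - p) * p ^ (k - 1)) * gg k p a := by
  obtain ⟨k', rfl⟩ : ∃ k', k = k' + 1 := ⟨k - 1, by omega⟩
  have hcong : ∀ σ : Fin (a + (k' + 1)) → Bool,
      (if (noRun (k' + 1) (a + (k' + 1)) σ ∧
          ∀ i : Fin (a + (k' + 1)), a + 1 ≤ (i : ℕ) → σ i = true) then wgt p σ else 0) =
      (if (noRun (k' + 1) a (fun i => σ (Fin.castAdd (k' + 1) i)) ∧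
          ∀ i : Fin (a + (k' + 1)), a ≤ (i : ℕ) → σ i = (fun j : ℕ => decide (a < j)) (i : ℕ))
        then wgt p σ else 0) := by
    intro σ
    exact if_congr (noRunTail_iff (k' + 1) a hk σ) rfl rfl
  rw [Finset.sum_congr rfl (fun σ _ => hcong σ),
    split_sum p a (k' + 1) (noRun (k' + 1) a) (fun j : ℕ => decide (a < j))]
  rw [Finset.prod_range_succ' (fun i => if decide (a < a + i) = true then p else 1 - p) k']
  have h1 : ∀ i ∈ Finset.range k',
      (if decide (a < a + (i + 1)) = true then p else 1 - p) = p := by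
    intro i _
    simp
  rw [Finset.prod_congr rfl h1, Finset.prod_const]
  simp only [Nat.add_zero, decide_eq_true_eq, lt_self_iff_false, if_false, Finset.card_range,
    Nat.add_sub_cancel]
  unfold gg
  ring

lemma gg_rec (k : ℕ) (hk : 1 ≤ k) (p : ℝ) (a : ℕ) :
    gg k p (a + k + 1) = gg k p (a + k) - ((1 - p) * p ^ k) * gg k p a := by
  set l := a + k with hl
  have hkl : k ≤ l := by omega
  -- step 1 : snoc decomposition of the sum
  have hbij : Function.Bijective
      (fun sb : (Fin l → Bool) × Bool => Fin.snoc sb.1 sb.2 : _ → (Fin (l + 1) → Bool)) := by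
    constructor
    · rintro ⟨u, b⟩ ⟨u', b'⟩ h
      simp only [Prod.mk.injEq]
      constructor
      · funext i
        have := congrFun h (Fin.castSucc i)
        simpa [Fin.snoc_castSucc] using this
      · have := congrFun h (Fin.last l)
        simpa [Fin.snoc_last] using this
    · intro ω
      exact ⟨(Fin.init ω, ω (Fin.last l)), Fin.snoc_init_self ω⟩
  have e1 : gg k p (l + 1) = ∑ sb : (Fin l → Bool) × Bool,
      (if noRun k (l + 1) (Fin.snoc sb.1 sb.2) then wgt p (Fin.snoc sb.1 sb.2) else 0) := by
    unfold gg
    exact (Fintype.sum_bijective _ hbij _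
      (fun ω => if noRun k (l + 1) ω then wgt p ω else 0) (fun sb => rfl)).symm
  -- step 2 : characterization of noRun on snoc
  have htrans : ∀ (σ : Fin l → Bool) (b : Bool) (j : ℕ), j ≤ l →
      (hasRunEnd k (l + 1) (Fin.snoc σ b) j ↔ hasRunEnd k l σ j) := by
    intro σ b j hj
    have := hasRunEnd_prefix k l 1 (Fin.snoc σ b) j hj
    rw [this]
    have hres : (fun i : Fin l => (Fin.snoc σ b : Fin (l + 1) → Bool) (Fin.castAdd 1 i)) = σ := by
      funext i
      exact Fin.snoc_castSucc (α := fun _ : Fin (l + 1) => Bool) b σ i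
    rw [hres]
  have hend : ∀ (σ : Fin l → Bool) (b : Bool),
      hasRunEnd k (l + 1) (Fin.snoc σ b) (l + 1) ↔
        (b = true ∧ ∀ i : Fin l, l + 1 - k ≤ (i : ℕ) → σ i = true) := by
    intro σ b
    constructor
    · rintro ⟨h1, h2, h3⟩
      constructor
      · have := h3 (Fin.last l) (by simp; omega) (by simp)
        rwa [Fin.snoc_last] at this
      · intro i hi
        have := h3 (Fin.castSucc i) (by simpa using hi) (by simp)
        rwa [Fin.snoc_castSucc] at this
    · rintro ⟨hb, hs⟩
      refine ⟨by omega, le_rfl, fun i hi1 hi2 => ?_⟩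
      rcases Nat.eq_or_lt_of_le (Nat.lt_succ_iff.mp i.isLt) with he | hlt
      · have : i = Fin.last l := Fin.ext he
        rw [this, Fin.snoc_last, hb]
      · have : i = Fin.castSucc (⟨(i : ℕ), hlt⟩ : Fin l) := Fin.ext rfl
        rw [this, Fin.snoc_castSucc]
        exact hs ⟨(i : ℕ), hlt⟩ (by simpa using hi1)
  have hchar : ∀ (σ : Fin l → Bool) (b : Bool),
      noRun k (l + 1) (Fin.snoc σ b) ↔
        (noRun k l σ ∧ (b = true → ¬ (∀ i : Fin l, l + 1 - k ≤ (i : ℕ) → σ i = true))) := by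
    intro σ b
    constructor
    · intro h
      refine ⟨fun j hr => h j ((htrans σ b j hr.2.1).mpr hr), fun hb hE => ?_⟩
      exact h (l + 1) ((hend σ b).mpr ⟨hb, hE⟩)
    · rintro ⟨h1, h2⟩ j hr
      rcases Nat.lt_or_ge j (l + 1) with hjl | hjl
      · exact h1 j ((htrans σ b j (by omega)).mp hr)
      · rcases Nat.eq_or_lt_of_le hjl with he | hgt
        · rcases (hend σ b).mp (he ▸ hr) with ⟨hb, hE⟩
          exact h2 hb hE
        · exact absurd hr.2.1 (by omega)
  -- step 3 : weight of snoc
  have hwsnoc : ∀ (σ : Fin l → Bool) (b : Bool),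
      wgt p (Fin.snoc σ b) = wgt p σ * (if b = true then p else 1 - p) := by
    intro σ b
    unfold wgt
    rw [Fin.prod_univ_castSucc]
    simp [Fin.snoc_castSucc, Fin.snoc_last]
  -- step 4 : compute
  rw [e1, Fintype.sum_prod_type]
  have hinner : ∀ σ : Fin l → Bool,
      (∑ b : Bool, if noRun k (l + 1) (Fin.snoc σ b) then wgt p (Fin.snoc σ b) else 0)
      = (1 - p) * (if noRun k l σ then wgt p σ else 0)
        + p * ((if noRun k l σ then wgt p σ else 0)
            - (if (noRun k l σ ∧ ∀ i : Fin l, l + 1 - k ≤ (i : ℕ) → σ i = true)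
                then wgt p σ else 0)) := by
    intro σ
    rw [Fintype.sum_bool]
    have d1 : noRun k (l + 1) (Fin.snoc σ true) ↔
        (noRun k l σ ∧ ¬ (∀ i : Fin l, l + 1 - k ≤ (i : ℕ) → σ i = true)) := by
      rw [hchar]
      tauto
    have d2 : noRun k (l + 1) (Fin.snoc σ false) ↔ noRun k l σ := by
      rw [hchar]
      constructor
      · exact fun h => h.1
      · exact fun h => ⟨h, by simp⟩
    rw [if_congr d1 rfl rfl, if_congr d2 rfl rfl, hwsnoc σ true, hwsnoc σ false,
      if_pos (rfl : true = true), if_neg (by simp : ¬ false = true)]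
    by_cases h1 : noRun k l σ
    · by_cases h2 : (∀ i : Fin l, l + 1 - k ≤ (i : ℕ) → σ i = true)
      · rw [if_neg (fun hc => hc.2 h2), if_pos h1, if_pos h1,
          if_pos (⟨h1, h2⟩ : noRun k l σ ∧ ∀ i : Fin l, l + 1 - k ≤ (i : ℕ) → σ i = true)]
        ring
      · rw [if_pos (⟨h1, h2⟩ :
            noRun k l σ ∧ ¬ (∀ i : Fin l, l + 1 - k ≤ (i : ℕ) → σ i = true)),
          if_pos h1, if_pos h1, if_neg (fun hc => h2 hc.2)]
        ring
    · rw [if_neg (fun hc => h1 hc.1), if_neg h1, if_neg h1,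
        if_neg (fun hc => h1 hc.1)]
      ring
  rw [Finset.sum_congr rfl (fun σ _ => hinner σ)]
  rw [Finset.sum_add_distrib]
  rw [← Finset.mul_sum, ← Finset.mul_sum]
  rw [Finset.sum_sub_distrib]
  have hT : (∑ σ : Fin l → Bool,
      if (noRun k l σ ∧ ∀ i : Fin l, l + 1 - k ≤ (i : ℕ) → σ i = true)
        then wgt p σ else 0) = ((1 - p) * p ^ (k - 1)) * gg k p a := by
    have hcond : ∀ σ : Fin l → Bool,
        (if (noRun k l σ ∧ ∀ i : Fin l, l + 1 - k ≤ (i : ℕ) → σ i = true)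
          then wgt p σ else 0)
        = (if (noRun k (a + k) σ ∧ ∀ i : Fin (a + k), a + 1 ≤ (i : ℕ) → σ i = true)
          then wgt p σ else 0) := by
      intro σ
      apply if_congr _ rfl rfl
      constructor
      · rintro ⟨x, y⟩; exact ⟨x, fun i hi => y i (by omega)⟩
      · rintro ⟨x, y⟩; exact ⟨x, fun i hi => y i (by omega)⟩
    rw [Finset.sum_congr rfl (fun σ _ => hcond σ)]
    exact T_split k hk p a
  rw [hT]
  have hgl : (∑ σ : Fin l → Bool, if noRun k l σ then wgt p σ else 0) = gg k p l := rfl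
  rw [hgl]
  have hp : p * ((1 - p) * p ^ (k - 1)) = (1 - p) * p ^ k := by
    obtain ⟨k', rfl⟩ : ∃ k', k = k' + 1 := ⟨k - 1, by omega⟩
    simp [pow_succ]
    ring
  rw [← hp]
  ring

noncomputable def F (k : ℕ) (p q : ℝ) (n : ℕ) : ℝ :=
  ∑ m ∈ Finset.Icc 1 ((n + 1) / (k + 1)),
    (-1 : ℝ) ^ (m - 1) * p ^ (m * k) * q ^ (m - 1) *
      ((if 2 ≤ m then ((n - m * k - 1).choose (m - 2) : ℝ) else 0)
        + q * ((n - m * k - 1).choose (m - 1)))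

lemma F_base (k : ℕ) (hk : 1 ≤ k) (p q : ℝ) (n : ℕ) (h1 : k + 1 ≤ n) (h2 : n ≤ 2 * k) :
    F k p q n = q * p ^ k := by
  unfold F
  have hM : (n + 1) / (k + 1) = 1 := by
    apply Nat.div_eq_of_lt_le
    · omega
    · omega
  rw [hM, Finset.Icc_self, Finset.sum_singleton]
  norm_num
  ring

lemma F_two (k : ℕ) (hk : 1 ≤ k) (p q : ℝ) :
    F k p q (2 * k + 1) = q * p ^ k - q * p ^ (2 * k) := by
  unfold F
  have hM : (2 * k + 1 + 1) / (k + 1) = 2 := by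
    rw [show 2 * k + 1 + 1 = 2 * (k + 1) by ring]
    exact Nat.mul_div_cancel 2 (by omega)
  rw [hM, Finset.sum_Icc_succ_top (by omega) _, Finset.Icc_self, Finset.sum_singleton]
  have e0 : 2 * k + 1 - 2 * k - 1 = 0 := by omega
  have e1 : 2 * k + 1 - 1 * k - 1 = k := by omega
  rw [e0, e1]
  norm_num
  ring

lemma F_rec (k : ℕ) (hk : 1 ≤ k) (p q : ℝ) (c : ℕ) :
    F k p q (c + (2 * k + 2)) = F k p q (c + (2 * k + 1)) - q * p ^ k * F k p q (c + (k + 1)) := by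
  set n := c + (2 * k + 2) with hn
  set M := (n + 1) / (k + 1) with hM
  have hMle : ∀ m, m ≤ M → m * k + m ≤ n + 1 := by
    intro m hm
    have := (Nat.le_div_iff_mul_le (by omega : 0 < k + 1)).mp hm
    nlinarith
  have hM2 : 2 ≤ M := by
    rw [hM]
    rw [Nat.le_div_iff_mul_le (by omega : 0 < k + 1)]
    omega
  -- step A : rewrite F (n-1) over Icc 1 M
  have hA : F k p q (c + (2 * k + 1)) = ∑ m ∈ Finset.Icc 1 M,
      (-1 : ℝ) ^ (m - 1) * p ^ (m * k) * q ^ (m - 1) *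
        ((if 2 ≤ m then (((c + (2 * k + 1)) - m * k - 1).choose (m - 2) : ℝ) else 0)
          + q * (((c + (2 * k + 1)) - m * k - 1).choose (m - 1))) := by
    unfold F
    apply Finset.sum_subset
    · apply Finset.Icc_subset_Icc_right
      rw [hM]
      apply Nat.div_le_div_right
      omega
    · intro m hm hnot
      simp only [Finset.mem_Icc] at hm hnot
      have hlt : (c + (2 * k + 1) + 1) / (k + 1) < m := by omega
      have hgt : c + (2 * k + 1) + 1 < m * (k + 1) := by
        have := (Nat.div_lt_iff_lt_mul (by omega : 0 < k + 1)).mp hlt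
        omega
      have heq : m * (k + 1) = n + 1 := by
        have h1 := hMle m hm.2
        have h2 : m * k + m = m * (k + 1) := by ring
        omega
      have hmk : m * k + m = n + 1 := by
        have h2 : m * k + m = m * (k + 1) := by ring
        omega
      have hm3 : 3 ≤ m := by nlinarith
      have hsub : c + (2 * k + 1) - m * k - 1 = m - 3 := by omega
      rw [hsub]
      rw [Nat.choose_eq_zero_of_lt (by omega), Nat.choose_eq_zero_of_lt (by omega)]
      simp
  -- step B : rewrite q p^k F (n-k-1) over Icc 1 M with shifted index
  have htop : (c + (k + 1) + 1) / (k + 1) = M - 1 := by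
    have : (c + (k + 1) + 1 + (k + 1)) / (k + 1) = (c + (k + 1) + 1) / (k + 1) + 1 :=
      Nat.add_div_right _ (by omega)
    have he : c + (k + 1) + 1 + (k + 1) = n + 1 := by omega
    rw [he] at this
    omega
  have hB : q * p ^ k * F k p q (c + (k + 1)) = ∑ m ∈ Finset.Icc 1 M,
      (if 2 ≤ m then
        q * p ^ k * ((-1 : ℝ) ^ (m - 2) * p ^ ((m - 1) * k) * q ^ (m - 2) *
          ((if 2 ≤ m - 1 then (((c + (k + 1)) - (m - 1) * k - 1).choose (m - 3) : ℝ) else 0)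
            + q * (((c + (k + 1)) - (m - 1) * k - 1).choose (m - 2))))
      else 0) := by
    unfold F
    rw [Finset.mul_sum, htop]
    rw [show ∑ m ∈ Finset.Icc 1 M,
      (if 2 ≤ m then
        q * p ^ k * ((-1 : ℝ) ^ (m - 2) * p ^ ((m - 1) * k) * q ^ (m - 2) *
          ((if 2 ≤ m - 1 then (((c + (k + 1)) - (m - 1) * k - 1).choose (m - 3) : ℝ) else 0)
            + q * (((c + (k + 1)) - (m - 1) * k - 1).choose (m - 2))))
      else 0)
      = ∑ m ∈ Finset.Icc 2 M,
        q * p ^ k * ((-1 : ℝ) ^ (m - 2) * p ^ ((m - 1) * k) * q ^ (m - 2) *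
          ((if 2 ≤ m - 1 then (((c + (k + 1)) - (m - 1) * k - 1).choose (m - 3) : ℝ) else 0)
            + q * (((c + (k + 1)) - (m - 1) * k - 1).choose (m - 2)))) from by
      rw [← Finset.sum_filter]
      congr 1
      ext x
      simp only [Finset.mem_filter, Finset.mem_Icc]
      omega]
    apply Finset.sum_nbij' (fun m => m + 1) (fun m => m - 1)
    · intro m hm
      simp only [Finset.mem_Icc] at hm ⊢
      omega
    · intro m hm
      simp only [Finset.mem_Icc] at hm ⊢
      omega
    · intro m hm
      omega
    · intro m hm
      simp only [Finset.mem_Icc] at hm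
      omega
    · intro m hm
      simp only [Finset.mem_Icc] at hm
      have e1 : m + 1 - 2 = m - 1 := by omega
      have e2 : m + 1 - 1 = m := by omega
      have e3 : m + 1 - 3 = m - 2 := by omega
      rw [e1, e2, e3]
  -- step C : termwise Pascal identity
  rw [hA, hB, ← Finset.sum_sub_distrib]
  unfold F
  rw [← hM]
  apply Finset.sum_congr rfl
  intro m hm
  simp only [Finset.mem_Icc] at hm
  have hmk : m * k + m ≤ n + 1 := hMle m hm.2
  rcases Nat.lt_or_ge m 2 with h2 | h2
  · have hm1 : m = 1 := by omega
    subst hm1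
    norm_num
  · obtain ⟨t, rfl⟩ : ∃ t, m = t + 2 := ⟨m - 2, by omega⟩
    have hn2 : (t + 2) * k + 2 ≤ n := by
      rcases Nat.eq_zero_or_pos t with ht | ht
      · subst ht
        have : (0 + 2) * k = 2 * k := by ring
        omega
      · have : (t + 2) * k + (t + 2) ≤ n + 1 := hmk
        omega
    have hNe : n - (t + 2) * k - 1 = (n - (t + 2) * k - 2) + 1 := by omega
    have hA1 : c + (2 * k + 1) - (t + 2) * k - 1 = n - (t + 2) * k - 2 := by omega
    have hB1 : c + (k + 1) - (t + 2 - 1) * k - 1 = n - (t + 2) * k - 2 := by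
      have hy : (t + 2 - 1) * k + k = (t + 2) * k := by
        rw [show t + 2 - 1 = t + 1 from rfl]
        ring
      omega
    rw [hNe, hA1, hB1]
    set N := n - (t + 2) * k - 2 with hN
    have hpw : p ^ ((t + 2) * k) = p ^ k * p ^ ((t + 2 - 1) * k) := by
      rw [← pow_add]
      congr 1
      rw [show t + 2 - 1 = t + 1 from rfl]
      ring
    simp only [show t + 2 - 1 = t + 1 from rfl, show t + 2 - 2 = t from rfl,
      show t + 2 - 3 = t - 1 from rfl, show t + 1 - 1 = t from rfl]
    rcases t with _ | s
    · have hc : ((N + 1).choose 1 : ℝ) = N.choose 0 + N.choose 1 := by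
        exact_mod_cast congrArg (Nat.cast : ℕ → ℝ) (Nat.choose_succ_succ N 0)
      norm_num [hc] at hpw ⊢
      rw [hpw]
      ring
    · have hc1 : ((N + 1).choose (s + 1 + 1) : ℝ) = N.choose (s + 1) + N.choose (s + 1 + 1) := by
        exact_mod_cast congrArg (Nat.cast : ℕ → ℝ) (Nat.choose_succ_succ N (s + 1))
      have hc2 : ((N + 1).choose (s + 1) : ℝ) = N.choose s + N.choose (s + 1) := by
        exact_mod_cast congrArg (Nat.cast : ℕ → ℝ) (Nat.choose_succ_succ N s)
      have hg1 : (2 ≤ s + 1 + 2) := by omega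
      have hg2 : (2 ≤ s + 1 + 1) := by omega
      have hpw2 : p ^ ((s + 1 + 2) * k) = p ^ k * p ^ ((s + 1 + 1) * k) := by
        rw [← pow_add]
        congr 1
        ring
      rw [if_pos hg1, if_pos hg1, if_pos hg1, if_pos hg2, hc1, hc2, hpw2]
      simp only [Nat.add_sub_cancel]
      ring

lemma main (k : ℕ) (hk : 1 ≤ k) (p : ℝ) :
    ∀ a, fk k p (a + (k + 1)) = F k p (1 - p) (a + (k + 1)) := by
  intro a
  induction a using Nat.strong_induction_on with
  | _ a ih =>
    rcases lt_trichotomy a k with h | h | h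
    · rw [fk_split k hk p a, gg_small k p a h,
        F_base k hk p (1 - p) (a + (k + 1)) (by omega) (by omega)]
      ring
    · rw [h, fk_split k hk p k, gg_k k p hk,
        show k + (k + 1) = 2 * k + 1 by ring, F_two k hk p]
      ring
    · obtain ⟨b, rfl⟩ : ∃ b, a = b + (k + 1) := ⟨a - (k + 1), by omega⟩
      have e1 : fk k p (b + (k + 1) + (k + 1)) =
          ((1 - p) * p ^ k) * (gg k p (b + k) - ((1 - p) * p ^ k) * gg k p b) := by
        rw [fk_split k hk p (b + (k + 1))]
        congr 1
        have hrec := gg_rec k hk p b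
        rw [show b + (k + 1) = b + k + 1 by ring]
        exact hrec
      rw [e1, mul_sub, ← fk_split k hk p (b + k), ← fk_split k hk p b,
        ih (b + k) (by omega), ih b (by omega)]
      have hfr := F_rec k hk p (1 - p) b
      rw [show b + (k + 1) + (k + 1) = b + (2 * k + 2) by ring,
        show b + k + (k + 1) = b + (2 * k + 1) by ring]
      exact hfr.symm

end MuselliAux

/-- Muselli's formula: for `n ≥ k+1`,
`f_k(n) = Σ_{m=1}^{⌊(n+1)/(k+1)⌋} (-1)^{m-1} p^{mk} q^{m-1}
  [C(n-mk-1, m-2) + q C(n-mk-1, m-1)]`, where `C(a,b) = 0` for `b < 0`. -/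
theorem pmf_formula_muselli (k : ℕ) (hk : 1 ≤ k) (p q : ℝ) (hp0 : 0 < p) (hp1 : p < 1)
    (hq : q = 1 - p) (n : ℕ) (hn : k + 1 ≤ n) :
    fk k p n = ∑ m ∈ Finset.Icc 1 ((n + 1) / (k + 1)),
      (-1 : ℝ) ^ (m - 1) * p ^ (m * k) * q ^ (m - 1) *
        ((if 2 ≤ m then ((n - m * k - 1).choose (m - 2) : ℝ) else 0)
          + q * ((n - m * k - 1).choose (m - 1))) := by
  subst hq
  obtain ⟨a, rfl⟩ : ∃ a, n = a + (k + 1) := ⟨n - (k + 1), by omega⟩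
  exact MuselliAux.main k hk p a
end
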